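/- arXiv:2111.06480 — 4 statements merged into one kernel-verified Lean document; each statement's English description precedes it below -/
import Mathlib

section
/- Let Z ⊂ X be a zero-dimensional closed subscheme, let i ∈ {1,…,k}, and let (a_1,…,a_k) ∈ ℕ^k with h^1(X, I_Z(a_1,…,a_k)) > 0. Then h^1(X, I_Z((a_1,…,a_k) + ε_i)) ≤ h^1(X, I_Z(a_1,…,a_k)). -/
/-!
Core framework: a concrete algebraic model of the multiprojective space
`X = ℙ^{n 0} × ⋯ × ℙ^{n (k-1)}` over a field `K`, via its multihomogeneous
coordinate ring `R = K[x_{ij}]`.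
-/

open MvPolynomial Module
open scoped TensorProduct

namespace MultiProjPaper

variable (K : Type) [Field K] (k : ℕ) (n : Fin k → ℕ)

/-- Index type of the variables `x_{ij}`, `i = 1, …, k`, `0 ≤ j ≤ n i`. -/
abbrev MPIdx := Σ i : Fin k, Fin (n i + 1)

/-- The multihomogeneous coordinate ring `R = K[x_{ij}]` of the multiprojective space. -/
abbrev MPR := MvPolynomial (MPIdx k n) K

/-- The weight of the variable `x_{ij}` is the multiindex `ε_i`. -/
def mpWeight : MPIdx k n → (Fin k → ℕ) := fun x => Pi.single x.1 1

/-- The space of multihomogeneous polynomials of multidegree `a`, i.e. `H^0(X, O_X(a))`. -/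
noncomputable def mcomp (a : Fin k → ℕ) : Submodule K (MPR K k n) :=
  weightedHomogeneousSubmodule K (mpWeight k n) a

/-- A (representative of a) point of `X`: a tuple of nonzero vectors. -/
structure MPPoint where
  v : ∀ i : Fin k, Fin (n i + 1) → K
  nz : ∀ i, v i ≠ 0

/-- Evaluation of a polynomial at (a representative of) a point. -/
noncomputable def MPPoint.ev (P : MPPoint K k n) (f : MPR K k n) : K :=
  MvPolynomial.eval (fun x : MPIdx k n => P.v x.1 x.2) f

/-- Evaluation at a scaling (by `lam i` on the `i`-th group of variables) of a point. -/
noncomputable def coneEval (lam : Fin k → K) (P : MPPoint K k n) (f : MPR K k n) : K :=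
  MvPolynomial.eval (fun x : MPIdx k n => lam x.1 * P.v x.1 x.2) f

/-- The (multihomogeneous, saturated) vanishing ideal of a set of points of `X`:
all polynomials vanishing on the affine multicone over the set. -/
noncomputable def vanIdeal (S : Set (MPPoint K k n)) : Ideal (MPR K k n) where
  carrier := {f | ∀ P ∈ S, ∀ lam : Fin k → K, coneEval K k n lam P f = 0}
  add_mem' := by
    intro f g hf hg P hP lam
    simp only [coneEval, map_add] at *
    rw [hf P hP lam, hg P hP lam, add_zero]
  zero_mem' := by intro P hP lam; simp [coneEval]
  smul_mem' := by
    intro c f hf P hP lam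
    simp only [coneEval, smul_eq_mul, map_mul] at *
    rw [hf P hP lam, mul_zero]

/-- `H^0(X, 𝓘(a))` for the sheaf of ideals associated to a multihomogeneous ideal `I`:
the multidegree-`a` component of `I`. -/
noncomputable def secI (I : Ideal (MPR K k n)) (a : Fin k → ℕ) : Submodule K (MPR K k n) :=
  mcomp K k n a ⊓ (Submodule.restrictScalars K I)

/-- `h^0(X, 𝓘(a))`. -/
noncomputable def h0I (I : Ideal (MPR K k n)) (a : Fin k → ℕ) : ℕ :=
  finrank K ↥(secI K k n I a)

/-- A zero-dimensional closed subscheme `Z ⊂ X`, modeled by its saturated multihomogeneous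
ideal `I`, together with its degree (= length) `deg`: the multigraded Hilbert function of
`R/I` is eventually constant, equal to `deg`. -/
structure ZeroDimClosed where
  I : Ideal (MPR K k n)
  homog : ∀ f ∈ I, ∀ a : Fin k → ℕ, weightedHomogeneousComponent (mpWeight k n) a f ∈ I
  saturated : ∀ f : MPR K k n,
    (∀ g : ∀ i : Fin k, Fin (n i + 1), (∏ i : Fin k, X (⟨i, g i⟩ : MPIdx k n)) * f ∈ I) → f ∈ I
  deg : ℕ
  hilb : ∃ d₀ : ℕ, ∀ a : Fin k → ℕ, (∀ i, d₀ ≤ a i) →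
    finrank K ↥(secI K k n I a) + deg = finrank K ↥(mcomp K k n a)

/-- `h^0(X, 𝓘_Z(a))` for a zero-dimensional closed subscheme `Z`. -/
noncomputable def h0Z (Z : ZeroDimClosed K k n) (a : Fin k → ℕ) : ℕ := h0I K k n Z.I a

/-- `h^1(X, 𝓘_Z(a))` for a zero-dimensional closed subscheme `Z` and `a ∈ ℕ^k`:
from the exact sequence `0 → 𝓘_Z(a) → O_X(a) → O_Z(a) → 0` and `h^1(O_X(a)) = 0`,
`h^1(𝓘_Z(a)) = deg Z - (h^0(O_X(a)) - h^0(𝓘_Z(a)))`. -/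
noncomputable def h1Z (Z : ZeroDimClosed K k n) (a : Fin k → ℕ) : ℤ :=
  (Z.deg : ℤ) + (h0Z K k n Z a : ℤ) - (finrank K ↥(mcomp K k n a) : ℤ)

/-- "A general tuple of `s` points of `X` satisfies `P`": there is a nonzero polynomial `F`
in the coordinates of the representative vectors of the `s` points (i.e. a nonempty Zariski
open subset of `X^s`) such that every tuple of points where `F` does not vanish satisfies `P`. -/
def GenericPts (s : ℕ) (P : (Fin s → MPPoint K k n) → Prop) : Prop :=
  ∃ F : MvPolynomial (Fin s × MPIdx k n) K, F ≠ 0 ∧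
    ∀ T : Fin s → MPPoint K k n,
      MvPolynomial.eval (fun q : Fin s × MPIdx k n => (T q.1).v q.2.1 q.2.2) F ≠ 0 → P T

/-- "A general tuple of `d` vectors of the `K`-vector space `V` satisfies `P`":
there is a nonzero polynomial in the coordinates (w.r.t. a fixed basis) of the `d` vectors
such that every tuple where it does not vanish satisfies `P`. -/
def GenericVecs (V : Type) [AddCommGroup V] [Module K V] (d : ℕ)
    (P : (Fin d → V) → Prop) : Prop :=
  ∃ F : MvPolynomial (Fin d × (Basis.ofVectorSpaceIndex K V)) K, F ≠ 0 ∧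
    ∀ w : Fin d → V,
      MvPolynomial.eval
        (fun q : Fin d × (Basis.ofVectorSpaceIndex K V) =>
          (Basis.ofVectorSpace K V).repr (w q.1) q.2) F ≠ 0 → P w

/-- Multiplication `H^0(O_X(c)) ⊗ H^0(𝓘(a)) → H^0(𝓘(a + c))` as a bilinear map. -/
noncomputable def mulSec (I : Ideal (MPR K k n)) (c a : Fin k → ℕ) :
    ↥(mcomp K k n c) →ₗ[K] ↥(secI K k n I a) →ₗ[K] ↥(secI K k n I (a + c)) :=
  LinearMap.mk₂ K
    (fun f g => ⟨(f : MPR K k n) * (g : MPR K k n), by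
      constructor
      · have hf : IsWeightedHomogeneous (mpWeight k n) (f : MPR K k n) c := f.2
        have hg : IsWeightedHomogeneous (mpWeight k n) (g : MPR K k n) a := g.2.1
        have := hf.mul hg
        rw [add_comm c a] at this
        exact this
      · exact Ideal.mul_mem_left _ _ g.2.2⟩)
    (fun f f' g => by apply Subtype.ext; simp [add_mul])
    (fun c' f g => by apply Subtype.ext; simp [smul_eq_mul]; try ring)
    (fun f g g' => by apply Subtype.ext; simp [mul_add])
    (fun c' f g => by apply Subtype.ext; simp [smul_eq_mul]; try ring)

/-- The multiplication map `μ : H^0(O_X(c)) ⊗ H^0(𝓘(a)) → H^0(𝓘(a+c))`. -/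
noncomputable def mulMap (I : Ideal (MPR K k n)) (c a : Fin k → ℕ) :
    (↥(mcomp K k n c) ⊗[K] ↥(secI K k n I a)) →ₗ[K] ↥(secI K k n I (a + c)) :=
  TensorProduct.lift (mulSec K k n I c a)

end MultiProjPaper

namespace MultiProjPaper


open MvPolynomial in
/-- Every multihomogeneous component is finite dimensional. -/
lemma mcomp_finiteDimensional (K : Type) [Field K] (k : ℕ) (n : Fin k → ℕ)
    (a : Fin k → ℕ) : FiniteDimensional K ↥(mcomp K k n a) := by
  have hle : mcomp K k n a ≤ restrictTotalDegree (MPIdx k n) K (∑ i, a i) := by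
    intro f hf
    rw [MvPolynomial.mem_restrictTotalDegree, MvPolynomial.totalDegree]
    apply Finset.sup_le
    intro d hd
    have hw : Finsupp.weight (mpWeight k n) d = a := hf (MvPolynomial.mem_support_iff.mp hd)
    have key : (d.sum fun _ e => e) = ∑ i : Fin k, a i := by
      rw [← hw, Finsupp.weight_apply]
      simp only [Finsupp.sum, Finset.sum_apply, Pi.smul_apply, smul_eq_mul, mpWeight]
      rw [Finset.sum_comm]
      apply Finset.sum_congr rfl
      intro x _
      rw [← Finset.mul_sum, Finset.sum_pi_single']
      simp
    exact le_of_eq key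
  exact Submodule.finiteDimensional_of_le hle

/-- A product of `m` elements of an ideal `J` lies in `J ^ m`. -/
lemma prod_mem_pow {R : Type} [CommRing R] (J : Ideal R) :
    ∀ (m : ℕ) (u : Fin m → R), (∀ t, u t ∈ J) → ∏ t, u t ∈ J ^ m := by
  intro m
  induction m with
  | zero => intro u _; simp [Ideal.one_eq_top]
  | succ m ih =>
    intro u hu
    rw [Fin.prod_univ_succ, pow_succ']
    exact Ideal.mul_mem_mul (hu 0) (ih _ fun t => hu t.succ)

open MvPolynomial in
/-- Iterated form of the saturation property. -/
lemma sat_iter (K : Type) [Field K] (k : ℕ) (n : Fin k → ℕ) (Z : ZeroDimClosed K k n) :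
    ∀ (m : ℕ) (f : MPR K k n),
      (∀ G : Fin m → (∀ i' : Fin k, Fin (n i' + 1)),
        (∏ t : Fin m, ∏ i' : Fin k, X (⟨i', G t i'⟩ : MPIdx k n)) * f ∈ Z.I) → f ∈ Z.I := by
  intro m
  induction m with
  | zero => intro f h; simpa using h (fun t => t.elim0)
  | succ m ih =>
    intro f h
    apply Z.saturated
    intro g
    apply ih
    intro G
    have h2 := h (Fin.cons g G)
    rw [Fin.prod_univ_succ] at h2
    simp only [Fin.cons_zero, Fin.cons_succ] at h2
    have e : ((∏ i' : Fin k, X (⟨i', g i'⟩ : MPIdx k n)) *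
        ∏ t : Fin m, ∏ i' : Fin k, X (⟨i', G t i'⟩ : MPIdx k n)) * f =
        (∏ t : Fin m, ∏ i' : Fin k, X (⟨i', G t i'⟩ : MPIdx k n)) *
        ((∏ i' : Fin k, X (⟨i', g i'⟩ : MPIdx k n)) * f) := by ring
    rw [e] at h2
    exact h2

/-- Proposition `0bg1`(1).
Let `Z ⊂ X = ℙ^{n_1} × ⋯ × ℙ^{n_k}` be a zero-dimensional closed subscheme, `i ∈ {1,…,k}`,
and `a ∈ ℕ^k` with `h^1(X, 𝓘_Z(a)) > 0`. Then `h^1(X, 𝓘_Z(a + ε_i)) ≤ h^1(X, 𝓘_Z(a))`. -/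
theorem statement0 (K : Type) [Field K] [IsAlgClosed K] [CharZero K]
    (k : ℕ) (n : Fin k → ℕ) (hn : ∀ i, 1 ≤ n i)
    (Z : ZeroDimClosed K k n) (i : Fin k) (a : Fin k → ℕ)
    (ha : 0 < h1Z K k n Z a) :
    h1Z K k n Z (a + Pi.single i 1) ≤ h1Z K k n Z a := by
  classical
  -- Lasker–Noether primary decomposition of `Z.I`
  obtain ⟨s, hinf, hprim⟩ : ∃ s : Finset (Ideal (MPR K k n)), s.inf id = Z.I ∧
      ∀ ⦃J : Ideal (MPR K k n)⦄, J ∈ s → J.IsPrimary := Ideal.isLasker (MPR K k n) (MPR K k n) Z.I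
  -- the primary components whose radical does not contain all i-th variables
  set s₂ : Finset (Ideal (MPR K k n)) :=
    s.filter (fun J => ∃ t : Fin (n i + 1), X (⟨i, t⟩ : MPIdx k n) ∉ J.radical) with hs₂
  -- Key 1: the intersection of those components is contained in `Z.I` (saturation).
  have key1 : ∀ f : MPR K k n, f ∈ s₂.inf id → f ∈ Z.I := by
    intro f hf
    set Jx : Ideal (MPR K k n) :=
      Ideal.span (Set.range fun t : Fin (n i + 1) => (X (⟨i, t⟩ : MPIdx k n) : MPR K k n))
      with hJx
    have hfg : Jx.FG := ⟨Finset.univ.image fun t : Fin (n i + 1) => X (⟨i, t⟩ : MPIdx k n), by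
      rw [hJx]; congr 1
      rw [Finset.coe_image, Finset.coe_univ, Set.image_univ]⟩
    have hM : ∀ j : Ideal (MPR K k n), ∃ M : ℕ,
        ((∀ t : Fin (n i + 1), X (⟨i, t⟩ : MPIdx k n) ∈ j.radical) → Jx ^ M ≤ j) := by
      intro j
      by_cases hj : ∀ t : Fin (n i + 1), X (⟨i, t⟩ : MPIdx k n) ∈ j.radical
      · have hle : Jx ≤ j.radical := by
          rw [hJx, Ideal.span_le]
          rintro _ ⟨t, rfl⟩
          exact hj t
        obtain ⟨M, hMle⟩ := Ideal.exists_pow_le_of_le_radical_of_fg hle hfg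
        exact ⟨M, fun _ => hMle⟩
      · exact ⟨0, fun h => absurd h hj⟩
    choose Mf hMf using hM
    set M := s.sup Mf with hMdef
    apply sat_iter K k n Z M f
    intro G
    rw [← hinf, Submodule.mem_finsetInf]
    intro j hj
    show _ ∈ j
    by_cases hj2 : ∃ t : Fin (n i + 1), X (⟨i, t⟩ : MPIdx k n) ∉ j.radical
    · have hfj : f ∈ j := Submodule.mem_finsetInf.mp hf j (Finset.mem_filter.mpr ⟨hj, hj2⟩)
      exact Ideal.mul_mem_left _ _ hfj
    · push_neg at hj2
      have hpow : Jx ^ M ≤ j :=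
        le_trans (Ideal.pow_le_pow_right (Finset.le_sup hj)) (hMf j hj2)
      apply Ideal.mul_mem_right
      have hfac : (∏ t : Fin M, X (⟨i, G t i⟩ : MPIdx k n)) ∈ j := by
        apply hpow
        apply prod_mem_pow
        intro t
        exact Ideal.subset_span ⟨G t i, rfl⟩
      have e : (∏ t : Fin M, ∏ i' : Fin k, (X (⟨i', G t i'⟩ : MPIdx k n) : MPR K k n))
          = (∏ t : Fin M, (X (⟨i, G t i⟩ : MPIdx k n) : MPR K k n)) *
              ∏ i' ∈ Finset.univ.erase i, ∏ t : Fin M, (X (⟨i', G t i'⟩ : MPIdx k n) : MPR K k n) := by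
        rw [Finset.prod_comm]
        exact (Finset.mul_prod_erase Finset.univ _ (Finset.mem_univ i)).symm
      rw [e]
      exact Ideal.mul_mem_right _ _ hfac
  -- The linear map sending coefficients to the linear form in the `i`-th variables.
  set Lmap : (Fin (n i + 1) → K) →ₗ[K] MPR K k n :=
    { toFun := fun lam => ∑ t : Fin (n i + 1), lam t • (X (⟨i, t⟩ : MPIdx k n) : MPR K k n)
      map_add' := by intro x y; simp [add_smul, Finset.sum_add_distrib]
      map_smul' := by intro c x; simp [smul_smul, Finset.smul_sum] } with hLmap
  have hLsingle : ∀ t : Fin (n i + 1), Lmap (Pi.single t 1) = X (⟨i, t⟩ : MPIdx k n) := by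
    intro t
    have hrfl : Lmap (Pi.single t 1) =
        ∑ t' : Fin (n i + 1),
          ((Pi.single t 1 : Fin (n i + 1) → K) t') • (X (⟨i, t'⟩ : MPIdx k n) : MPR K k n) := rfl
    rw [hrfl, Fintype.sum_eq_single t]
    · simp
    · intro t' ht'
      rw [Pi.single_eq_of_ne ht', zero_smul]
  -- Key 2: choice of a linear form outside all relevant radicals.
  have hfun : ∀ j : Ideal (MPR K k n), ∃ φ : (Fin (n i + 1) → K) →ₗ[K] K,
      (j ∈ s₂ → (∀ lam, Lmap lam ∈ j.radical → φ lam = 0) ∧ φ ≠ 0) := by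
    intro j
    by_cases hj : j ∈ s₂
    · obtain ⟨t0, ht0⟩ : ∃ t : Fin (n i + 1), X (⟨i, t⟩ : MPIdx k n) ∉ j.radical :=
        (Finset.mem_filter.mp hj).2
      set Sj : Submodule K (Fin (n i + 1) → K) :=
        (Submodule.restrictScalars K j.radical).comap Lmap with hSj
      have hv : Sj.mkQ (Pi.single t0 1) ≠ 0 := by
        rw [Submodule.mkQ_apply, Ne, Submodule.Quotient.mk_eq_zero]
        intro hmem
        apply ht0
        have : Lmap (Pi.single t0 1) ∈ j.radical := hmem
        rwa [hLsingle t0] at this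
      have : ¬ ∀ ψ : Module.Dual K ((Fin (n i + 1) → K) ⧸ Sj), ψ (Sj.mkQ (Pi.single t0 1)) = 0 := by
        rw [Module.forall_dual_apply_eq_zero_iff]
        exact hv
      obtain ⟨ψ, hψ⟩ := not_forall.mp this
      refine ⟨ψ.comp Sj.mkQ, fun _ => ⟨?_, ?_⟩⟩
      · intro lam hlam
        have hmem : lam ∈ Sj := hlam
        simp [Submodule.Quotient.mk_eq_zero Sj |>.mpr hmem]
      · intro h0
        apply hψ
        have := LinearMap.congr_fun h0 (Pi.single t0 1)
        simpa using this
    · exact ⟨0, fun h => absurd h hj⟩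
  choose φ hφ using hfun
  -- the polynomial detecting genericity
  set F : MvPolynomial (Fin (n i + 1)) K :=
    ∏ j ∈ s₂, ∑ t : Fin (n i + 1), (C (φ j ((Pi.single t 1 : Fin (n i + 1) → K))) * X t) with hF
  have heval : ∀ (ψ : (Fin (n i + 1) → K) →ₗ[K] K) (u : Fin (n i + 1) → K),
      MvPolynomial.eval u (∑ t : Fin (n i + 1), (C (ψ ((Pi.single t 1 : Fin (n i + 1) → K))) * X t)) = ψ u := by
    intro ψ u
    rw [map_sum]
    simp only [map_mul, eval_C, eval_X]
    conv_rhs => rw [← Finset.univ_sum_single u, map_sum]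
    apply Finset.sum_congr rfl
    intro t _
    have hsingle : (Pi.single t (u t) : Fin (n i + 1) → K)
        = u t • (Pi.single t 1 : Fin (n i + 1) → K) := by
      rw [← Pi.single_smul, smul_eq_mul, mul_one]
    rw [hsingle, map_smul, smul_eq_mul]
    ring
  have hFne : F ≠ 0 := by
    rw [hF]
    rw [Finset.prod_ne_zero_iff]
    intro j hj h0
    apply (hφ j hj).2
    apply LinearMap.ext
    intro lam
    have := heval (φ j) lam
    rw [h0] at this
    simpa using this.symm
  obtain ⟨u, hu⟩ : ∃ u : Fin (n i + 1) → K, MvPolynomial.eval u F ≠ 0 := by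
    by_contra h
    push_neg at h
    exact hFne (MvPolynomial.funext (fun x => by rw [h x, map_zero]))
  have huj : ∀ j ∈ s₂, φ j u ≠ 0 := by
    intro j hj
    rw [hF, map_prod] at hu
    have := Finset.prod_ne_zero_iff.mp hu j hj
    rwa [heval] at this
  set ℓ : MPR K k n := Lmap u with hl
  have hlrad : ∀ j ∈ s₂, ℓ ∉ j.radical := by
    intro j hj hmem
    exact huj j hj ((hφ j hj).1 u hmem)
  -- Key 3: `ℓ` is a nonzerodivisor modulo `Z.I`.
  have hreg : ∀ f : MPR K k n, ℓ * f ∈ Z.I → f ∈ Z.I := by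
    intro f hlf
    by_contra hf
    obtain ⟨j, hjs₂, hfj⟩ : ∃ j ∈ s₂, f ∉ j := by
      by_contra h
      push_neg at h
      exact hf (key1 f (Submodule.mem_finsetInf.mpr h))
    have hIj : Z.I ≤ j := by
      rw [← hinf]
      exact Finset.inf_le (Finset.mem_filter.mp hjs₂).1
    have hmul : f * ℓ ∈ j := hIj (by rwa [mul_comm])
    rcases (Ideal.isPrimary_iff.mp (hprim (Finset.mem_filter.mp hjs₂).1)).2 hmul with h | h
    · exact hfj h
    · exact hlrad j hjs₂ h
  -- `ℓ` is multihomogeneous of multidegree `ε_i`.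
  have hlhom : IsWeightedHomogeneous (mpWeight k n) ℓ (Pi.single i 1) := by
    rw [← mem_weightedHomogeneousSubmodule K]
    have hrfl : ℓ = ∑ t : Fin (n i + 1), u t • (X (⟨i, t⟩ : MPIdx k n) : MPR K k n) := rfl
    rw [hrfl]
    apply Submodule.sum_mem
    intro t _
    apply Submodule.smul_mem
    rw [mem_weightedHomogeneousSubmodule]
    exact isWeightedHomogeneous_X K (mpWeight k n) (⟨i, t⟩ : MPIdx k n)
  -- The linear algebra conclusion.
  set V := mcomp K k n a with hV
  set W := mcomp K k n (a + Pi.single i 1) with hW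
  set S := secI K k n Z.I a with hS
  set S' := secI K k n Z.I (a + Pi.single i 1) with hS'
  haveI : FiniteDimensional K ↥V := mcomp_finiteDimensional K k n a
  haveI : FiniteDimensional K ↥W := mcomp_finiteDimensional K k n (a + Pi.single i 1)
  have hSV : S ≤ V := inf_le_left
  have hS'W : S' ≤ W := inf_le_left
  set Sc : Submodule K ↥V := S.comap V.subtype with hSc
  set Sc' : Submodule K ↥W := S'.comap W.subtype with hSc'
  have hmulmem : ∀ f : ↥V, ℓ * (f : MPR K k n) ∈ W := by
    intro f
    have h2 : IsWeightedHomogeneous (mpWeight k n) (f : MPR K k n) a := f.2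
    have := hlhom.mul h2
    rw [add_comm] at this
    exact this
  set μ : ↥V →ₗ[K] ↥W :=
    { toFun := fun f => ⟨ℓ * (f : MPR K k n), hmulmem f⟩
      map_add' := fun f g => Subtype.ext (by simp [mul_add])
      map_smul' := fun c f => Subtype.ext (by simp [mul_smul_comm]) } with hμ
  set ν : ↥V →ₗ[K] (↥W ⧸ Sc') := Sc'.mkQ.comp μ with hν
  have hker1 : Sc ≤ LinearMap.ker ν := by
    intro f hf
    have hfS : (f : MPR K k n) ∈ S := hf
    rw [LinearMap.mem_ker, hν, LinearMap.comp_apply, Submodule.mkQ_apply,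
      Submodule.Quotient.mk_eq_zero]
    show (μ f : MPR K k n) ∈ S'
    exact Submodule.mem_inf.mpr ⟨hmulmem f, Ideal.mul_mem_left _ _ hfS.2⟩
  set νbar : (↥V ⧸ Sc) →ₗ[K] (↥W ⧸ Sc') := Sc.liftQ ν hker1 with hνbar
  have hker2 : LinearMap.ker ν ≤ Sc := by
    intro f hf
    rw [LinearMap.mem_ker, hν, LinearMap.comp_apply, Submodule.mkQ_apply,
      Submodule.Quotient.mk_eq_zero] at hf
    have hmem : (μ f : MPR K k n) ∈ S' := hf
    have hIf : ℓ * (f : MPR K k n) ∈ Z.I := hmem.2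
    have : (f : MPR K k n) ∈ Z.I := hreg _ hIf
    show (f : MPR K k n) ∈ S
    exact Submodule.mem_inf.mpr ⟨f.2, this⟩
  have hinj : Function.Injective νbar :=
    LinearMap.ker_eq_bot.mp (Submodule.ker_liftQ_eq_bot _ _ _ hker2)
  have e1 : finrank K (↥V ⧸ Sc) + finrank K Sc = finrank K ↥V :=
    Submodule.finrank_quotient_add_finrank Sc
  have e2 : finrank K (↥W ⧸ Sc') + finrank K Sc' = finrank K ↥W :=
    Submodule.finrank_quotient_add_finrank Sc'
  have e3 : finrank K Sc = finrank K ↥S :=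
    LinearEquiv.finrank_eq (Submodule.comapSubtypeEquivOfLe hSV)
  have e4 : finrank K Sc' = finrank K ↥S' :=
    LinearEquiv.finrank_eq (Submodule.comapSubtypeEquivOfLe hS'W)
  have e5 : finrank K (↥V ⧸ Sc) ≤ finrank K (↥W ⧸ Sc') :=
    LinearMap.finrank_le_finrank_of_injective hinj
  have e1' : finrank K (↥V ⧸ Sc) + finrank K Sc = finrank K ↥(mcomp K k n a) := by
    rw [← hV]; exact e1
  have e2' : finrank K (↥W ⧸ Sc') + finrank K Sc'
      = finrank K ↥(mcomp K k n (a + Pi.single i 1)) := by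
    rw [← hW]; exact e2
  have e3' : finrank K Sc = finrank K ↥(secI K k n Z.I a) := by
    rw [← hS]; exact e3
  have e4' : finrank K Sc' = finrank K ↥(secI K k n Z.I (a + Pi.single i 1)) := by
    rw [← hS']; exact e4
  simp only [h1Z, h0Z, h0I]
  omega

end MultiProjPaper
end

section
/- Let Z ⊂ X be a zero-dimensional closed subscheme, let i ∈ {1,…,k}, and let (a_1,…,a_k) ∈ ℕ^k with h^1(X, I_Z(a_1,…,a_k)) > 0. If there exists a point p ∈ ℙ^{n_i} such that Z ⊂ π_i^{-1}(p), then h^1(X, I_Z((a_1,…,a_k) + ε_i)) = h^1(X, I_Z(a_1,…,a_k)). -/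
/-!
Core framework: a concrete algebraic model of the multiprojective space
`X = ℙ^{n 0} × ⋯ × ℙ^{n (k-1)}` over a field `K`, via its multihomogeneous
coordinate ring `R = K[x_{ij}]`.
-/

open MvPolynomial Module
open scoped TensorProduct

namespace MultiProjPaper

variable (K : Type) [Field K] (k : ℕ) (n : Fin k → ℕ)

/-- The ideal of the fiber `π_i⁻¹(p)` of the `i`-th projection over a point
`p ∈ ℙ^{n_i}` (given by a nonzero coordinate vector): it is generated by the
linear forms in the `i`-th group of variables vanishing at `p`. -/
noncomputable def fiberIdeal (i : Fin k) (p : Fin (n i + 1) → K) : Ideal (MPR K k n) :=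
  Ideal.span {f | ∃ c : Fin (n i + 1) → K, (∑ j, c j * p j) = 0 ∧
    f = ∑ j, (c j) • X (⟨i, j⟩ : MPIdx k n)}

section Aux

variable {K : Type} [Field K] {k : ℕ} {n : Fin k → ℕ}

lemma sum_weight_apply (d : MPIdx k n →₀ ℕ) :
    ∑ i : Fin k, Finsupp.weight (mpWeight k n) d i = d.sum fun _ e => e := by
  classical
  simp only [Finsupp.weight_apply, Finsupp.sum, Finset.sum_apply]
  rw [Finset.sum_comm]
  refine Finset.sum_congr rfl fun x _ => ?_
  simp only [Pi.smul_apply, smul_eq_mul, mpWeight]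
  rw [← Finset.mul_sum]
  have : ∑ i : Fin k, Pi.single (M := fun _ => ℕ) x.1 1 i = 1 := by
    simp [Fintype.sum_pi_single']
  rw [this, mul_one]

lemma weight_apply_at (d : MPIdx k n →₀ ℕ) (i : Fin k) :
    Finsupp.weight (mpWeight k n) d i = ∑ x ∈ d.support, d x * Pi.single (M := fun _ => ℕ) x.1 1 i := by
  classical
  simp only [Finsupp.weight_apply, Finsupp.sum, Finset.sum_apply, Pi.smul_apply, smul_eq_mul,
    mpWeight]

instance mcomp_fd (b : Fin k → ℕ) : FiniteDimensional K ↥(mcomp K k n b) := by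
  apply Submodule.finiteDimensional_of_le
    (S₂ := MvPolynomial.restrictTotalDegree (MPIdx k n) K (∑ i, b i))
  intro f hf
  rw [MvPolynomial.mem_restrictTotalDegree]
  apply Finset.sup_le
  intro d hd
  have hw : Finsupp.weight (mpWeight k n) d = b := hf (MvPolynomial.mem_support_iff.mp hd)
  rw [← sum_weight_apply d, hw]

end Aux
section Aux2

variable {K : Type} [Field K] {k : ℕ} {n : Fin k → ℕ}

/-- Division by the variable `X y`, as a linear map. -/
noncomputable def divY (y : MPIdx k n) : MPR K k n →ₗ[K] MPR K k n where
  toFun f := f.divMonomial (Finsupp.single y 1)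
  map_add' f g := by
    ext d
    simp [MvPolynomial.coeff_divMonomial, MvPolynomial.coeff_add]
  map_smul' c f := by
    ext d
    simp [MvPolynomial.coeff_divMonomial, MvPolynomial.coeff_smul]

lemma coeff_divY (y : MPIdx k n) (f : MPR K k n) (d : MPIdx k n →₀ ℕ) :
    MvPolynomial.coeff d (divY y f) = MvPolynomial.coeff (Finsupp.single y 1 + d) f :=
  MvPolynomial.coeff_divMonomial _ _ _

/-- Remainder mod the variable `X y`, as a linear map. -/
noncomputable def modY (y : MPIdx k n) : MPR K k n →ₗ[K] MPR K k n :=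
  LinearMap.id - (LinearMap.mulLeft K (MvPolynomial.X y)).comp (divY y)

lemma modY_apply (y : MPIdx k n) (f : MPR K k n) :
    modY y f = f - MvPolynomial.X y * divY y f := rfl

lemma X_mul_divY_add_modY (y : MPIdx k n) (f : MPR K k n) :
    MvPolynomial.X y * divY y f + modY y f = f := by
  rw [modY_apply]; ring

lemma divY_X_mul (y : MPIdx k n) (g : MPR K k n) : divY y (MvPolynomial.X y * g) = g := by
  ext d
  rw [coeff_divY, MvPolynomial.coeff_X_mul]

lemma coeff_X_mul_divY (y : MPIdx k n) (f : MPR K k n) (d : MPIdx k n →₀ ℕ) :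
    MvPolynomial.coeff d (MvPolynomial.X y * divY y f)
      = if d y = 0 then 0 else MvPolynomial.coeff d f := by
  classical
  rw [MvPolynomial.coeff_X_mul']
  by_cases h : d y = 0
  · simp [Finsupp.mem_support_iff, h]
  · rw [if_pos (Finsupp.mem_support_iff.mpr h), if_neg h, coeff_divY]
    congr 1
    rw [add_tsub_cancel_of_le (Finsupp.single_le_iff.mpr (Nat.one_le_iff_ne_zero.mpr h))]

lemma coeff_modY (y : MPIdx k n) (f : MPR K k n) (d : MPIdx k n →₀ ℕ) :
    MvPolynomial.coeff d (modY y f) = if d y = 0 then MvPolynomial.coeff d f else 0 := by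
  classical
  rw [modY_apply, MvPolynomial.coeff_sub, coeff_X_mul_divY]
  by_cases h : d y = 0 <;> simp [h]

lemma divY_modY (y : MPIdx k n) (f : MPR K k n) : divY y (modY y f) = 0 := by
  ext d
  rw [coeff_divY, coeff_modY, MvPolynomial.coeff_zero]
  simp [Finsupp.single_apply]

lemma coeff_eq_zero_of_ker_divY {y : MPIdx k n} {f : MPR K k n} (hf : divY y f = 0)
    {d : MPIdx k n →₀ ℕ} (hd : MvPolynomial.coeff d f ≠ 0) : d y = 0 := by
  by_contra h
  have := coeff_X_mul_divY y f d
  rw [hf, mul_zero, MvPolynomial.coeff_zero] at this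
  rw [if_neg h] at this
  exact hd this.symm

end Aux2
section Aux3

variable {K : Type} [Field K] {k : ℕ} {n : Fin k → ℕ}

open MvPolynomial

lemma pow_mem_mcomp {b : Fin k → ℕ} {f : MPR K k n} (hf : f ∈ mcomp K k n b) (e : ℕ) :
    f ^ e ∈ mcomp K k n (e • b) := by
  induction e with
  | zero => simpa [mcomp, mem_weightedHomogeneousSubmodule] using isWeightedHomogeneous_one K (mpWeight k n)
  | succ m ih =>
    rw [pow_succ, succ_nsmul]
    exact IsWeightedHomogeneous.mul ih hf

lemma aeval_mem_mcomp (q : MPIdx k n → MPR K k n)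
    (hq : ∀ x, q x ∈ mcomp K k n (mpWeight k n x)) {b : Fin k → ℕ} {f : MPR K k n}
    (hf : f ∈ mcomp K k n b) : MvPolynomial.aeval q f ∈ mcomp K k n b := by
  classical
  have hrw : MvPolynomial.aeval q f
      = ∑ d ∈ f.support, MvPolynomial.aeval q (monomial d (coeff d f)) := by
    rw [← map_sum, ← f.as_sum]
  rw [hrw]
  apply Submodule.sum_mem
  intro d hd
  rw [aeval_monomial]
  have hw : Finsupp.weight (mpWeight k n) d = b := hf (mem_support_iff.mp hd)
  have hprod : (d.prod fun x e => q x ^ e) ∈ mcomp K k n (Finsupp.weight (mpWeight k n) d) := by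
    rw [Finsupp.prod, Finsupp.weight_apply, Finsupp.sum]
    exact IsWeightedHomogeneous.prod d.support _ _ fun x _ => pow_mem_mcomp (hq x) (d x)
  have := (isWeightedHomogeneous_C (R := K) (mpWeight k n) (coeff d f)).mul hprod
  rw [zero_add, hw] at this
  simpa [algebraMap_eq, mcomp, mem_weightedHomogeneousSubmodule] using this

lemma divY_mem_mcomp {i : Fin k} {j0 : Fin (n i + 1)} {a : Fin k → ℕ} {f : MPR K k n}
    (hf : f ∈ mcomp K k n (a + Pi.single i 1)) :
    divY (⟨i, j0⟩ : MPIdx k n) f ∈ mcomp K k n a := by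
  intro d hd
  rw [coeff_divY] at hd
  have := hf hd
  rw [map_add] at this
  have hsw : Finsupp.weight (mpWeight k n) (Finsupp.single (⟨i, j0⟩ : MPIdx k n) 1)
      = Pi.single i 1 := by
    rw [Finsupp.weight_apply, Finsupp.sum_single_index (by simp)]
    simp [mpWeight]
  rw [hsw] at this
  have : Pi.single i 1 + Finsupp.weight (mpWeight k n) d = Pi.single i 1 + a := by
    rw [this, add_comm a]
  exact add_left_cancel this

lemma modY_mem_mcomp {y : MPIdx k n} {b : Fin k → ℕ} {f : MPR K k n}
    (hf : f ∈ mcomp K k n b) : modY y f ∈ mcomp K k n b := by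
  intro d hd
  rw [coeff_modY] at hd
  by_cases h : d y = 0
  · rw [if_pos h] at hd; exact hf hd
  · rw [if_neg h] at hd; exact absurd rfl hd

end Aux3
section Aux4

variable {K : Type} [Field K] {k : ℕ} {n : Fin k → ℕ}

open MvPolynomial Module

lemma count_lemma (y : MPIdx k n) (U V : Submodule K (MPR K k n))
    [FiniteDimensional K U] [FiniteDimensional K V]
    (h1 : ∀ g ∈ U, MvPolynomial.X y * g ∈ V)
    (h2 : ∀ f ∈ V, divY y f ∈ U)
    (h3 : ∀ f ∈ V, modY y f ∈ V) :
    finrank K V = finrank K U + finrank K ↥(V ⊓ LinearMap.ker (divY y)) := by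
  classical
  set N := V ⊓ LinearMap.ker (divY y) with hN
  let φ0 : (U × N) →ₗ[K] MPR K k n :=
    ((LinearMap.mulLeft K (MvPolynomial.X y)).comp
      (U.subtype.comp (LinearMap.fst K U N))) + (N.subtype.comp (LinearMap.snd K U N))
  have hφ0 : ∀ z : U × N, φ0 z ∈ V := fun z =>
    V.add_mem (h1 _ z.1.2) (Submodule.mem_inf.mp z.2.2).1
  let φ : (U × N) →ₗ[K] V := φ0.codRestrict V hφ0
  have h2' : ∀ x ∈ V, divY y x ∈ U := h2
  have h3' : ∀ x ∈ V, modY y x ∈ N := fun x hx =>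
    Submodule.mem_inf.mpr ⟨h3 _ hx, by simp [LinearMap.mem_ker, divY_modY]⟩
  let ψm : V →ₗ[K] U × N :=
    LinearMap.prod ((divY y).restrict h2') ((modY y).restrict h3')
  have hφ_apply : ∀ z : U × N,
      (φ z : MPR K k n) = MvPolynomial.X y * (z.1 : MPR K k n) + (z.2 : MPR K k n) :=
    fun z => rfl
  have hψ1 : ∀ f : V, ((ψm f).1 : MPR K k n) = divY y (f : MPR K k n) := fun f => rfl
  have hψ2 : ∀ f : V, ((ψm f).2 : MPR K k n) = modY y (f : MPR K k n) := fun f => rfl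
  have e : (U × N) ≃ₗ[K] V := by
    refine LinearEquiv.ofLinear φ ψm ?_ ?_
    · apply LinearMap.ext; intro f
      apply Subtype.ext
      rw [LinearMap.comp_apply, hφ_apply, hψ1, hψ2, LinearMap.id_apply]
      exact X_mul_divY_add_modY y (f : MPR K k n)
    · apply LinearMap.ext; intro z
      have hz : divY y (z.2 : MPR K k n) = 0 := (Submodule.mem_inf.mp z.2.2).2
      refine Prod.ext (Subtype.ext ?_) (Subtype.ext ?_)
      · rw [LinearMap.comp_apply, LinearMap.id_apply]
        rw [show ((ψm (φ z)).1 : MPR K k n) = divY y (φ z : MPR K k n) from rfl, hφ_apply,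
          map_add, divY_X_mul, hz, add_zero]
      · rw [LinearMap.comp_apply, LinearMap.id_apply]
        rw [show ((ψm (φ z)).2 : MPR K k n) = modY y (φ z : MPR K k n) from rfl, hφ_apply,
          modY_apply, map_add, divY_X_mul, hz, add_zero]
        ring
  have hNfd : FiniteDimensional K N := Submodule.finiteDimensional_of_le inf_le_left
  rw [← e.finrank_eq, Module.finrank_prod]

end Aux4
section Aux5

variable {K : Type} [Field K] {k : ℕ} {n : Fin k → ℕ}

open MvPolynomial Module

/-- Coefficient function for the change of coordinates. -/
noncomputable def cfun (i : Fin k) (j0 : Fin (n i + 1)) (t : Fin (n i + 1) → K) :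
    MPIdx k n → K :=
  fun x => ∑ j : Fin (n i + 1), if x = ⟨i, j⟩ then (if j = j0 then 0 else t j) else 0

lemma cfun_mk (i : Fin k) (j0 : Fin (n i + 1)) (t : Fin (n i + 1) → K) (j : Fin (n i + 1)) :
    cfun i j0 t ⟨i, j⟩ = if j = j0 then 0 else t j := by
  classical
  rw [cfun, Finset.sum_eq_single j]
  · rw [if_pos rfl]
  · intro j' _ hj'
    rw [if_neg]
    intro hc
    rw [Sigma.mk.inj_iff] at hc
    exact hj' (eq_of_heq hc.2).symm
  · intro h; exact absurd (Finset.mem_univ j) h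

lemma cfun_fst {i : Fin k} {j0 : Fin (n i + 1)} {t : Fin (n i + 1) → K} {x : MPIdx k n}
    (h : cfun i j0 t x ≠ 0) : x.1 = i := by
  by_contra hx
  apply h
  rw [cfun]
  apply Finset.sum_eq_zero
  intro j _
  rw [if_neg]
  intro hc
  exact hx (by rw [hc])

lemma cfun_j0 (i : Fin k) (j0 : Fin (n i + 1)) (t : Fin (n i + 1) → K) :
    cfun i j0 t ⟨i, j0⟩ = 0 := by rw [cfun_mk, if_pos rfl]

/-- The substitution arguments are multihomogeneous of the correct degree. -/
lemma subst_arg_mem (i : Fin k) (j0 : Fin (n i + 1)) (c : MPIdx k n → K)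
    (hc : ∀ x, c x ≠ 0 → x.1 = i) (s : K) (x : MPIdx k n) :
    MvPolynomial.X x + MvPolynomial.C (s * c x) * MvPolynomial.X (⟨i, j0⟩ : MPIdx k n)
      ∈ mcomp K k n (mpWeight k n x) := by
  apply Submodule.add_mem
  · exact isWeightedHomogeneous_X K _ x
  · by_cases h : c x = 0
    · rw [h, mul_zero, map_zero, zero_mul]; exact Submodule.zero_mem _
    · have hx : x.1 = i := hc x h
      have : mpWeight k n x = mpWeight k n (⟨i, j0⟩ : MPIdx k n) := by
        rw [mpWeight, mpWeight, hx]
      rw [this]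
      have := (isWeightedHomogeneous_C (R := K) (mpWeight k n) (s * c x)).mul
        (isWeightedHomogeneous_X K (mpWeight k n) (⟨i, j0⟩ : MPIdx k n))
      rwa [zero_add] at this

/-- Polynomials that avoid `X ⟨i,j0⟩` but have positive degree in the `i`-th group belong to
any ideal containing all the other variables of the `i`-th group. -/
lemma yfree_mem (I : Ideal (MPR K k n)) (i : Fin k) (j0 : Fin (n i + 1))
    (hX : ∀ j, j ≠ j0 → MvPolynomial.X (⟨i, j⟩ : MPIdx k n) ∈ I) (a : Fin k → ℕ)
    (f : MPR K k n) (hf : f ∈ mcomp K k n (a + Pi.single i 1))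
    (hker : divY (⟨i, j0⟩ : MPIdx k n) f = 0) : f ∈ I := by
  classical
  rw [f.as_sum]
  apply Ideal.sum_mem
  intro d hd
  have hdy : d ⟨i, j0⟩ = 0 := coeff_eq_zero_of_ker_divY hker (mem_support_iff.mp hd)
  have hw : Finsupp.weight (mpWeight k n) d = a + Pi.single i 1 :=
    hf (mem_support_iff.mp hd)
  have hex : ∃ j, d ⟨i, j⟩ ≠ 0 := by
    by_contra hcon
    push_neg at hcon
    have h1 : Finsupp.weight (mpWeight k n) d i = a i + 1 := by
      rw [hw]; simp
    rw [weight_apply_at] at h1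
    rw [Finset.sum_eq_zero] at h1
    · omega
    · rintro ⟨i', j⟩ _
      by_cases hii : i' = i
      · subst hii; rw [hcon j]; ring
      · simp [Pi.single_eq_of_ne (Ne.symm hii)]
  obtain ⟨j, hj⟩ := hex
  have hjj0 : j ≠ j0 := fun h => hj (by rw [h]; exact hdy)
  have hle : Finsupp.single (⟨i, j⟩ : MPIdx k n) 1 ≤ d :=
    Finsupp.single_le_iff.mpr (Nat.one_le_iff_ne_zero.mpr hj)
  have hmon : monomial d (coeff d f)
      = MvPolynomial.X (⟨i, j⟩ : MPIdx k n)
        * monomial (d - Finsupp.single (⟨i, j⟩ : MPIdx k n) 1) (coeff d f) := by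
    rw [show (MvPolynomial.X (⟨i, j⟩ : MPIdx k n) : MPR K k n)
        = monomial (Finsupp.single (⟨i, j⟩ : MPIdx k n) 1) 1 from rfl,
      monomial_mul, one_mul, add_tsub_cancel_of_le hle]
  rw [hmon]
  exact Ideal.mul_mem_right _ _ (hX j hjj0)

/-- Transport of graded sections of an ideal along a graded automorphism. -/
lemma finrank_sec_comap (φ φ' : MPR K k n →ₐ[K] MPR K k n)
    (hinv : ∀ f, φ (φ' f) = f) (hinv' : ∀ f, φ' (φ f) = f)
    (hφ : ∀ b : Fin k → ℕ, ∀ f ∈ mcomp K k n b, φ f ∈ mcomp K k n b)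
    (hφ' : ∀ b : Fin k → ℕ, ∀ f ∈ mcomp K k n b, φ' f ∈ mcomp K k n b)
    (I : Ideal (MPR K k n)) (b : Fin k → ℕ) :
    finrank K ↥(mcomp K k n b ⊓ Submodule.restrictScalars K I)
      = finrank K ↥(mcomp K k n b ⊓
          Submodule.restrictScalars K (I.comap (φ' : MPR K k n →+* MPR K k n))) := by
  set J := I.comap (φ' : MPR K k n →+* MPR K k n) with hJ
  have hfwd : ∀ f ∈ mcomp K k n b ⊓ Submodule.restrictScalars K I,
      φ.toLinearMap f ∈ mcomp K k n b ⊓ Submodule.restrictScalars K J := by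
    intro f hf
    rw [Submodule.mem_inf] at hf ⊢
    refine ⟨hφ b f hf.1, ?_⟩
    rw [Submodule.restrictScalars_mem, hJ, Ideal.mem_comap]
    show φ' (φ f) ∈ I
    rw [hinv' f]
    exact hf.2
  have hbwd : ∀ f ∈ mcomp K k n b ⊓ Submodule.restrictScalars K J,
      φ'.toLinearMap f ∈ mcomp K k n b ⊓ Submodule.restrictScalars K I := by
    intro f hf
    rw [Submodule.mem_inf] at hf ⊢
    exact ⟨hφ' b f hf.1, hf.2⟩
  have e : ↥(mcomp K k n b ⊓ Submodule.restrictScalars K I)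
      ≃ₗ[K] ↥(mcomp K k n b ⊓ Submodule.restrictScalars K J) := by
    refine LinearEquiv.ofLinear (φ.toLinearMap.restrict hfwd) (φ'.toLinearMap.restrict hbwd)
      ?_ ?_
    · apply LinearMap.ext; intro f; apply Subtype.ext
      simp only [LinearMap.comp_apply, LinearMap.restrict_apply, LinearMap.id_apply]
      exact hinv f
    · apply LinearMap.ext; intro f; apply Subtype.ext
      simp only [LinearMap.comp_apply, LinearMap.restrict_apply, LinearMap.id_apply]
      exact hinv' f
  exact e.finrank_eq

end Aux5
/-- Proposition `0bg1`(2).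
Let `Z ⊂ X` be a zero-dimensional closed subscheme, `i ∈ {1,…,k}`, and `a ∈ ℕ^k` with
`h^1(X, 𝓘_Z(a)) > 0`. If there is a point `p ∈ ℙ^{n_i}` such that `Z ⊂ π_i⁻¹(p)`, then
`h^1(X, 𝓘_Z(a + ε_i)) = h^1(X, 𝓘_Z(a))`. -/
theorem statement1 (K : Type) [Field K] [IsAlgClosed K] [CharZero K]
    (k : ℕ) (n : Fin k → ℕ) (hn : ∀ i, 1 ≤ n i)
    (Z : ZeroDimClosed K k n) (i : Fin k) (a : Fin k → ℕ)
    (ha : 0 < h1Z K k n Z a)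
    (hfib : ∃ p : Fin (n i + 1) → K, p ≠ 0 ∧ fiberIdeal K k n i p ≤ Z.I) :
    h1Z K k n Z (a + Pi.single i 1) = h1Z K k n Z a := by
  classical
  obtain ⟨p, hp, hpI⟩ := hfib
  have hex0 : ∃ j0, p j0 ≠ 0 := by
    by_contra h; push_neg at h; exact hp (funext h)
  obtain ⟨j0, hj0⟩ := hex0
  set y : MPIdx k n := ⟨i, j0⟩ with hy
  set t : Fin (n i + 1) → K := fun j => p j / p j0 with ht
  -- the linear forms `X j - t j • X j0` are in the ideal of `Z`
  have hlin : ∀ j, (X (⟨i, j⟩ : MPIdx k n) - C (t j) * X y : MPR K k n) ∈ Z.I := by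
    intro j
    apply hpI
    apply Ideal.subset_span
    refine ⟨fun j' => (if j' = j then 1 else 0) - (if j' = j0 then t j else 0), ?_, ?_⟩
    · simp only [sub_mul, Finset.sum_sub_distrib, ite_mul, one_mul, zero_mul]
      rw [Finset.sum_ite_eq' Finset.univ j (fun j' => p j'),
        Finset.sum_ite_eq' Finset.univ j0 (fun j' => t j * p j')]
      simp [ht, div_mul_cancel₀ _ hj0]
    · simp only [sub_smul, Finset.sum_sub_distrib, ite_smul, one_smul, zero_smul]
      rw [Finset.sum_ite_eq' Finset.univ j (fun j' => (X (⟨i, j'⟩ : MPIdx k n) : MPR K k n)),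
        Finset.sum_ite_eq' Finset.univ j0
          (fun j' => t j • (X (⟨i, j'⟩ : MPIdx k n) : MPR K k n))]
      simp [smul_eq_C_mul, hy]
  set c : MPIdx k n → K := cfun i j0 t with hc
  have hcfst : ∀ x, c x ≠ 0 → x.1 = i := fun x h => cfun_fst h
  have hcy : c y = 0 := cfun_j0 i j0 t
  set q : MPIdx k n → MPR K k n := fun x => X x + C (c x) * X y with hqdef
  set q' : MPIdx k n → MPR K k n := fun x => X x - C (c x) * X y with hq'def
  set φ : MPR K k n →ₐ[K] MPR K k n := aeval q with hφdef
  set φ' : MPR K k n →ₐ[K] MPR K k n := aeval q' with hφ'def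
  have hφX : ∀ x, φ (X x) = X x + C (c x) * X y := fun x => aeval_X q x
  have hφ'X : ∀ x, φ' (X x) = X x - C (c x) * X y := fun x => aeval_X q' x
  have hinv : ∀ f, φ (φ' f) = f := by
    have : φ.comp φ' = AlgHom.id K (MPR K k n) := by
      apply algHom_ext
      intro x
      rw [AlgHom.comp_apply, AlgHom.id_apply, hφ'X, map_sub, map_mul, hφX, hφX, hcy,
        algHom_C]
      rw [map_zero, zero_mul, add_zero, algebraMap_eq]
      ring
    intro f
    calc φ (φ' f) = (φ.comp φ') f := rfl
    _ = f := by rw [this]; rfl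
  have hinv' : ∀ f, φ' (φ f) = f := by
    have : φ'.comp φ = AlgHom.id K (MPR K k n) := by
      apply algHom_ext
      intro x
      rw [AlgHom.comp_apply, AlgHom.id_apply, hφX, map_add, map_mul, hφ'X, hφ'X, hcy,
        algHom_C]
      rw [map_zero, zero_mul, sub_zero, algebraMap_eq]
      ring
    intro f
    calc φ' (φ f) = (φ'.comp φ) f := rfl
    _ = f := by rw [this]; rfl
  have hqmem : ∀ x, q x ∈ mcomp K k n (mpWeight k n x) := by
    intro x
    have := subst_arg_mem i j0 c hcfst 1 x
    rw [one_mul] at this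
    exact this
  have hq'mem : ∀ x, q' x ∈ mcomp K k n (mpWeight k n x) := by
    intro x
    have := subst_arg_mem i j0 c hcfst (-1) x
    rw [neg_one_mul, map_neg, neg_mul, ← sub_eq_add_neg] at this
    exact this
  have hφm : ∀ b : Fin k → ℕ, ∀ f ∈ mcomp K k n b, φ f ∈ mcomp K k n b :=
    fun b f hf => aeval_mem_mcomp q hqmem hf
  have hφ'm : ∀ b : Fin k → ℕ, ∀ f ∈ mcomp K k n b, φ' f ∈ mcomp K k n b :=
    fun b f hf => aeval_mem_mcomp q' hq'mem hf
  set J : Ideal (MPR K k n) := Z.I.comap (φ' : MPR K k n →+* MPR K k n) with hJdef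
  have hsecJ : ∀ b : Fin k → ℕ, h0Z K k n Z b
      = finrank K ↥(mcomp K k n b ⊓ Submodule.restrictScalars K J) :=
    fun b => finrank_sec_comap φ φ' hinv hinv' hφm hφ'm Z.I b
  have hXJ : ∀ j, j ≠ j0 → X (⟨i, j⟩ : MPIdx k n) ∈ J := by
    intro j hj
    rw [hJdef, Ideal.mem_comap]
    show φ' (X ⟨i, j⟩) ∈ Z.I
    rw [hφ'X]
    have : c ⟨i, j⟩ = t j := by rw [hc, cfun_mk, if_neg hj]
    rw [this]
    exact hlin j
  have hsat : ∀ g : MPR K k n, X y * g ∈ J → g ∈ J := by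
    intro g hg
    rw [hJdef, Ideal.mem_comap]
    show φ' g ∈ Z.I
    apply Z.saturated
    intro G
    have hyg : X y * φ' g ∈ Z.I := by
      rw [hJdef, Ideal.mem_comap] at hg
      have hg' : φ' (X y * g) ∈ Z.I := hg
      rwa [map_mul, hφ'X, hcy, map_zero, zero_mul, sub_zero] at hg'
    have hall : ∀ j : Fin (n i + 1), X (⟨i, j⟩ : MPIdx k n) * φ' g ∈ Z.I := by
      intro j
      have hsplit : (X (⟨i, j⟩ : MPIdx k n) : MPR K k n)
          = (X ⟨i, j⟩ - C (t j) * X y) + C (t j) * X y := by ring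
      rw [hsplit, add_mul]
      apply Ideal.add_mem
      · exact Ideal.mul_mem_right _ _ (hlin j)
      · rw [mul_assoc]
        exact Ideal.mul_mem_left _ _ hyg
    have hprod : (∏ i', X (⟨i', G i'⟩ : MPIdx k n)) * φ' g
        = (X (⟨i, G i⟩ : MPIdx k n) * φ' g)
          * ∏ i' ∈ Finset.univ.erase i, X (⟨i', G i'⟩ : MPIdx k n) := by
      rw [← Finset.mul_prod_erase Finset.univ _ (Finset.mem_univ i)]
      ring
    rw [hprod]
    exact Ideal.mul_mem_right _ _ (hall (G i))
  -- the two counting identities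
  haveI fd1 : FiniteDimensional K
      ↥(mcomp K k n a ⊓ Submodule.restrictScalars K J) :=
    Submodule.finiteDimensional_of_le inf_le_left
  haveI fd2 : FiniteDimensional K
      ↥(mcomp K k n (a + Pi.single i 1) ⊓ Submodule.restrictScalars K J) :=
    Submodule.finiteDimensional_of_le inf_le_left
  have hwy : mpWeight k n y + a = a + Pi.single i 1 := by
    rw [add_comm]; rfl
  have hcount1 : finrank K ↥(mcomp K k n (a + Pi.single i 1))
      = finrank K ↥(mcomp K k n a)
        + finrank K ↥(mcomp K k n (a + Pi.single i 1) ⊓ LinearMap.ker (divY y)) := by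
    apply count_lemma y
    · intro g hg
      have := (isWeightedHomogeneous_X K (mpWeight k n) y).mul hg
      exact hwy ▸ this
    · intro f hf
      exact divY_mem_mcomp hf
    · intro f hf
      exact modY_mem_mcomp hf
  have hyfree : ∀ f ∈ mcomp K k n (a + Pi.single i 1), divY y f = 0 → f ∈ J :=
    fun f hf hker => yfree_mem J i j0 hXJ a f hf hker
  have hcount2 : finrank K ↥(mcomp K k n (a + Pi.single i 1) ⊓ Submodule.restrictScalars K J)
      = finrank K ↥(mcomp K k n a ⊓ Submodule.restrictScalars K J)
        + finrank K ↥((mcomp K k n (a + Pi.single i 1) ⊓ Submodule.restrictScalars K J)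
            ⊓ LinearMap.ker (divY y)) := by
    apply count_lemma y
    · intro g hg
      rw [Submodule.mem_inf] at hg ⊢
      constructor
      · have := (isWeightedHomogeneous_X K (mpWeight k n) y).mul hg.1
        exact hwy ▸ this
      · exact Ideal.mul_mem_left _ _ hg.2
    · intro f hf
      rw [Submodule.mem_inf] at hf ⊢
      refine ⟨divY_mem_mcomp hf.1, ?_⟩
      have hmodJ : modY y f ∈ J :=
        hyfree _ (modY_mem_mcomp hf.1) (divY_modY y f)
      have hXdiv : X y * divY y f ∈ J := by
        have : X y * divY y f = f - modY y f := by
          rw [modY_apply]; ring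
        rw [this]
        exact Ideal.sub_mem _ hf.2 hmodJ
      exact hsat _ hXdiv
    · intro f hf
      rw [Submodule.mem_inf] at hf ⊢
      exact ⟨modY_mem_mcomp hf.1,
        hyfree _ (modY_mem_mcomp hf.1) (divY_modY y f)⟩
  have hNeq : (mcomp K k n (a + Pi.single i 1) ⊓ Submodule.restrictScalars K J)
      ⊓ LinearMap.ker (divY y)
      = mcomp K k n (a + Pi.single i 1) ⊓ LinearMap.ker (divY y) := by
    apply le_antisymm
    · intro f hf
      rw [Submodule.mem_inf] at hf ⊢
      exact ⟨(Submodule.mem_inf.mp hf.1).1, hf.2⟩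
    · intro f hf
      rw [Submodule.mem_inf] at hf ⊢
      refine ⟨Submodule.mem_inf.mpr ⟨(Submodule.mem_inf.mp hf).1, ?_⟩,
        (Submodule.mem_inf.mp hf).2⟩
      exact hyfree _ (Submodule.mem_inf.mp hf).1 (Submodule.mem_inf.mp hf).2
  rw [hNeq] at hcount2
  show (Z.deg : ℤ) + (h0Z K k n Z (a + Pi.single i 1) : ℤ)
      - (finrank K ↥(mcomp K k n (a + Pi.single i 1)) : ℤ)
    = (Z.deg : ℤ) + (h0Z K k n Z a : ℤ) - (finrank K ↥(mcomp K k n a) : ℤ)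
  rw [hsecJ a, hsecJ (a + Pi.single i 1), hcount1, hcount2]
  push_cast
  ring

end MultiProjPaper
end

section
/- Let Y be an integral projective variety over K and R a globally generated line bundle on Y with h^1(Y, R) = 0. Set X := Y × ℙ^1 with projections π_1 : X → Y and π_2 : X → ℙ^1, and for t ∈ ℤ set R⊠(t) := π_1^*(R) ⊗ π_2^*(O_{ℙ^1}(t)). Let Z ⊂ X be a zero-dimensional closed subscheme such that h^1(X, I_Z ⊗ R⊠(z)) = 0 for some z ∈ ℕ, and let e be the minimal such natural number. For t ≥ 0, let μ_t : H^0(π_2^*(O_{ℙ^1}(1))) ⊗ H^0(I_Z ⊗ R⊠(t)) → H^0(I_Z ⊗ R⊠(t+1)) be the multiplication map. Then μ_y is surjective for all integers y > e. -/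
open Module MvPolynomial
open scoped TensorProduct

namespace MultiProjPaper

/-- `H^0(ℙ^m, O_{ℙ^m}(t))`: the space of degree-`t` homogeneous polynomials in
`K[x_0, …, x_m]` (as a type, to keep typeclass inference manageable). -/
def PmT (K : Type) [Field K] (m t : ℕ) : Type :=
  ↥(homogeneousSubmodule (Fin (m + 1)) K t)

noncomputable instance (K : Type) [Field K] (m t : ℕ) : AddCommGroup (PmT K m t) :=
  inferInstanceAs (AddCommGroup ↥(homogeneousSubmodule (Fin (m + 1)) K t))

noncomputable instance (K : Type) [Field K] (m t : ℕ) : Module K (PmT K m t) :=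
  inferInstanceAs (Module K ↥(homogeneousSubmodule (Fin (m + 1)) K t))

/-- The homogeneous polynomial underlying an element of `H^0(ℙ^m, O(t))`. -/
def PmT.poly {K : Type} [Field K] {m t : ℕ} (g : PmT K m t) :
    MvPolynomial (Fin (m + 1)) K := g.1

lemma PmT.isHomogeneous {K : Type} [Field K] {m t : ℕ} (g : PmT K m t) :
    (PmT.poly g).IsHomogeneous t := g.2

lemma PmT.poly_add {K : Type} [Field K] {m t : ℕ} (g g' : PmT K m t) :
    (g + g').poly = g.poly + g'.poly := rfl

lemma PmT.poly_smul {K : Type} [Field K] {m t : ℕ} (c : K) (g : PmT K m t) :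
    (c • g).poly = c • g.poly := rfl

/-- Model of a zero-dimensional closed subscheme `Z` of `M = Y × ℙ^m`, where `Y` is an
integral projective variety over `K` and `R` is a globally generated line bundle on `Y`
with `h^1(Y, R) = 0` and with space of global sections `V = H^0(Y, R)`.

`Z` is encoded by its (finite-dimensional, commutative) algebra of global functions
`A = H^0(Z, O_Z)` (so `deg Z = dim_K A`), together with:
* `ρ : V → A`, the restriction map `H^0(Y, R) → H^0(Z, R|_Z) ≅ A` (after a trivialization
  of the line bundle `R` on the zero-dimensional scheme `Z`);
* `ξ : Fin (m+1) → A`, the restrictions to `Z` of the homogeneous coordinates of `ℙ^m`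
  (after a trivialization of `O(1)|_Z`).

The field `spanξ` records that the homogeneous coordinates of `ℙ^m` have no common zero
(hence generate the unit ideal on the finite scheme `Z`); the field `spanρ` is the model
counterpart of the hypothesis that `R` is globally generated (its global sections have no
common zero on `Y`, hence generate the unit ideal on `Z`).

By the Künneth formula and the hypothesis `h^1(Y, R) = 0`, for `t ∈ ℕ` one has
`H^0(M, R ⊠ (t)) = H^0(Y, R) ⊗ K[x_0, …, x_m]_t`, the space `H^0(M, 𝓘_Z ⊗ R ⊠ (t))` is
the kernel of the evaluation ("restriction to `Z`") map
`H^0(Y, R) ⊗ K[x_0, …, x_m]_t → A`, `σ ⊗ g ↦ ρ(σ)·g(ξ)`, and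
`h^1(M, 𝓘_Z ⊗ R ⊠ (t)) = dim_K A - rank(evaluation map)`. -/
structure ZeroDimInProd (K : Type) [Field K]
    (V : Type) [AddCommGroup V] [Module K V] (m : ℕ) where
  A : Type
  [instCommRing : CommRing A]
  [instAlgebra : Algebra K A]
  [instFinite : Module.Finite K A]
  ρ : V →ₗ[K] A
  ξ : Fin (m + 1) → A
  spanξ : Ideal.span (Set.range ξ) = ⊤
  spanρ : Ideal.span (Set.range ⇑ρ) = ⊤

attribute [instance] ZeroDimInProd.instCommRing ZeroDimInProd.instAlgebra
  ZeroDimInProd.instFinite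

variable {K : Type} [Field K] {V : Type} [AddCommGroup V] [Module K V] {m : ℕ}

/-- The evaluation (restriction to `Z`) map `H^0(Y,R) × K[x]_t → H^0(Z, O_Z)` as a
bilinear map: `(σ, g) ↦ ρ(σ) · g(ξ)`. -/
noncomputable def evBil (Z : ZeroDimInProd K V m) (t : ℕ) :
    V →ₗ[K] PmT K m t →ₗ[K] Z.A :=
  LinearMap.mk₂ K
    (fun v g => Z.ρ v * (aeval Z.ξ) (PmT.poly g))
    (fun v v' g => by simp [add_mul])
    (fun c v g => by simp [smul_mul_assoc])
    (fun v g g' => by simp [PmT.poly_add, mul_add])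
    (fun c v g => by simp [PmT.poly_smul, mul_smul_comm])

/-- The restriction map `H^0(M, R ⊠ (t)) = H^0(Y,R) ⊗ K[x]_t → H^0(Z, O_Z)`. -/
noncomputable def evMap (Z : ZeroDimInProd K V m) (t : ℕ) :
    (V ⊗[K] PmT K m t) →ₗ[K] Z.A :=
  TensorProduct.lift (evBil Z t)

/-- `H^0(M, 𝓘_Z ⊗ R ⊠ (t))` (for `t ∈ ℕ`). -/
def H0IZ (Z : ZeroDimInProd K V m) (t : ℕ) : Type :=
  ↥(LinearMap.ker (evMap Z t))

noncomputable instance (Z : ZeroDimInProd K V m) (t : ℕ) : AddCommGroup (H0IZ Z t) :=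
  inferInstanceAs (AddCommGroup ↥(LinearMap.ker (evMap Z t)))

noncomputable instance (Z : ZeroDimInProd K V m) (t : ℕ) : Module K (H0IZ Z t) :=
  inferInstanceAs (Module K ↥(LinearMap.ker (evMap Z t)))

/-- `h^0(M, 𝓘_Z ⊗ R ⊠ (t))` (for `t ∈ ℕ`). -/
noncomputable def h0ZP (Z : ZeroDimInProd K V m) (t : ℕ) : ℕ :=
  finrank K (H0IZ Z t)

/-- `h^1(M, 𝓘_Z ⊗ R ⊠ (t))` (for `t ∈ ℕ`): `deg Z` minus the rank of the restriction
map `H^0(M, R ⊠ (t)) → H^0(Z, O_Z)`. -/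
noncomputable def h1ZP (Z : ZeroDimInProd K V m) (t : ℕ) : ℕ :=
  finrank K Z.A - finrank K ↥(LinearMap.range (evMap Z t))

end MultiProjPaper

namespace MultiProjPaper

variable {K : Type} [Field K] {V : Type} [AddCommGroup V] [Module K V]

/-- Multiplication of homogeneous polynomials on `ℙ^m`,
`H^0(O(1)) × H^0(O(t)) → H^0(O(t+1))`, as a bilinear map. -/
noncomputable def polyMulBil (K : Type) [Field K] (m t : ℕ) :
    PmT K m 1 →ₗ[K] PmT K m t →ₗ[K] PmT K m (t + 1) :=
  LinearMap.mk₂ K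
    (fun g h => (⟨PmT.poly g * PmT.poly h, by
      rw [mem_homogeneousSubmodule]
      have := g.isHomogeneous.mul h.isHomogeneous
      simpa only [Nat.add_comm 1 t] using this⟩ : PmT K m (t + 1)))
    (fun g g' h => Subtype.ext (by simp [PmT.poly_add, add_mul]; rfl))
    (fun c g h => Subtype.ext (by simp [PmT.poly_smul, smul_mul_assoc]; rfl))
    (fun g h h' => Subtype.ext (by simp [PmT.poly_add, mul_add]; rfl))
    (fun c g h => Subtype.ext (by simp [PmT.poly_smul, mul_smul_comm]; rfl))

lemma evMap_mul (Z : ZeroDimInProd K V 1) (t : ℕ) (g : PmT K 1 1) :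
    (evMap Z (t + 1)).comp (LinearMap.lTensor V ((polyMulBil K 1 t) g)) =
    (LinearMap.mulLeft K ((aeval Z.ξ) (PmT.poly g))).comp (evMap Z t) := by
  apply TensorProduct.ext'
  intro v h
  have key : PmT.poly ((polyMulBil K 1 t) g h) = PmT.poly g * PmT.poly h := rfl
  simp [evMap, evBil, key]
  ring

/-- The multiplication map
`μ_t : H^0(π_2^*(O_{ℙ^1}(1))) ⊗ H^0(𝓘_Z ⊗ R ⊠ (t)) → H^0(𝓘_Z ⊗ R ⊠ (t+1))`,
`σ ⊗ τ ↦ σ·τ`. -/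
noncomputable def muMap (Z : ZeroDimInProd K V 1) (t : ℕ) :
    (PmT K 1 1 ⊗[K] H0IZ Z t) →ₗ[K] H0IZ Z (t + 1) :=
  LinearMap.codRestrict (LinearMap.ker (evMap Z (t + 1)))
    (TensorProduct.lift (LinearMap.mk₂ K
      (fun (g : PmT K 1 1) (x : H0IZ Z t) =>
        LinearMap.lTensor V ((polyMulBil K 1 t) g) x.1)
      (fun g g' x => by
        show LinearMap.lTensor V ((polyMulBil K 1 t) (g + g')) x.1 = _
        rw [map_add, LinearMap.lTensor_add, LinearMap.add_apply])
      (fun c g x => by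
        show LinearMap.lTensor V ((polyMulBil K 1 t) (c • g)) x.1 = _
        rw [map_smul, LinearMap.lTensor_smul, LinearMap.smul_apply])
      (fun g x x' => by
        show LinearMap.lTensor V ((polyMulBil K 1 t) g) (x.1 + x'.1) = _
        rw [map_add])
      (fun c g x => by
        show LinearMap.lTensor V ((polyMulBil K 1 t) g) (c • x.1) = _
        rw [map_smul])))
    (by
      intro x
      induction x using TensorProduct.induction_on with
      | zero => simp
      | tmul g y =>
          rw [TensorProduct.lift.tmul, LinearMap.mk₂_apply, LinearMap.mem_ker]
          have h1 := LinearMap.congr_fun (evMap_mul Z t g) y.1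
          simp only [LinearMap.comp_apply, LinearMap.mulLeft_apply] at h1
          rw [h1, LinearMap.mem_ker.mp y.2, mul_zero]
      | add x y hx hy => rw [map_add]; exact add_mem hx hy)

end MultiProjPaper

/-!
Restriction to `Z` is a map `ev_t : H^0(Y, R) ⊗ H^0(O_{ℙ^1}(t)) → H^0(O_Z)`, and
`h^1(I_Z ⊗ R⊠(t)) = 0` says exactly that `ev_t` is onto. As `Z` is finite, all but finitely
many forms `ℓ_c = x₀ + c x₁` are units on `Z`, and multiplying by one of them shows that `ev_t`
stays onto for every `t ≥ e`.

For `y > e` take two distinct unit forms `ℓ, ℓ'`. They span `H^0(O_{ℙ^1}(1))`, so every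
`τ ∈ ker ev_{y+1}` is `ℓσ + ℓ'w`. Replacing `(σ, w)` by `(σ + ℓ'α, w - ℓα)` leaves `τ`
unchanged, and since `ev_{y-1}` is onto and `ℓ'` is a unit, `α` can be chosen with
`ev_y(σ + ℓ'α) = 0`. Then `ℓ' · ev_y(w - ℓα) = 0`, so `w - ℓα` lies in the kernel as well.
-/

theorem MvPolynomial.IsHomogeneous.exists_sum_X_mul {σ K : Type*} [Field K] [CharZero K]
    [Fintype σ] {d : ℕ} {p : MvPolynomial σ K} (hp : p.IsHomogeneous (d + 1)) :
    ∃ q : σ → MvPolynomial σ K, (∀ i, (q i).IsHomogeneous d) ∧ p = ∑ i, X i * q i := by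
  refine ⟨fun i => C ((d + 1 : K)⁻¹) * pderiv i p, fun i => hp.pderiv.C_mul _, ?_⟩
  have hd : (d + 1 : K) ≠ 0 := Nat.cast_add_one_ne_zero d
  simp_rw [mul_left_comm (X _), ← Finset.mul_sum, hp.sum_X_mul_pderiv, nsmul_eq_mul,
    ← mul_assoc, ← map_natCast C, ← MvPolynomial.C_mul]
  simp [hd]

theorem finite_setOf_not_isUnit_add_algebraMap_mul {K A : Type*} [Field K] [CommRing A]
    [Algebra K A] [IsArtinianRing A] {x y : A} (hxy : Ideal.span {x, y} = ⊤) :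
    {c : K | ¬ IsUnit (x + algebraMap K A c * y)}.Finite := by
  have hsub : ∀ I : Ideal A, I.IsMaximal →
      {c : K | x + algebraMap K A c * y ∈ I}.Subsingleton := by
    intro I hI c₁ h₁ c₂ h₂
    by_contra hne
    have hy : y ∈ I := by
      have := I.mul_mem_left (algebraMap K A (c₁ - c₂)⁻¹) (I.sub_mem h₁ h₂)
      rwa [add_sub_add_left_eq_sub, ← sub_mul, ← map_sub, ← mul_assoc, ← map_mul,
        inv_mul_cancel₀ (sub_ne_zero.mpr hne), map_one, one_mul] at this
    have hx : x ∈ I := by simpa using I.sub_mem h₁ (I.mul_mem_left (algebraMap K A c₁) hy)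
    refine hI.ne_top (top_le_iff.mp (hxy ▸ ?_))
    rw [Ideal.span_le, Set.insert_subset_iff, Set.singleton_subset_iff]
    exact ⟨hx, hy⟩
  refine ((IsArtinianRing.setOfPred_isMaximal_finite A).biUnion fun I hI =>
    (hsub I hI).finite).subset fun c hc => ?_
  obtain ⟨I, hI, hmem⟩ := exists_max_ideal_of_mem_nonunits hc
  exact Set.mem_biUnion hI hmem

theorem TensorProduct.exists_lTensor_add_lTensor {R M N P : Type*} [CommRing R]
    [AddCommGroup M] [Module R M] [AddCommGroup N] [Module R N] [AddCommGroup P] [Module R P]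
    (f g : N →ₗ[R] P) (hfg : ∀ p, ∃ a b, f a + g b = p) (τ : M ⊗[R] P) :
    ∃ σ w, LinearMap.lTensor M f σ + LinearMap.lTensor M g w = τ := by
  have hsurj : Function.Surjective (f.coprod g) := fun p => by simpa using hfg p
  obtain ⟨u, rfl⟩ := LinearMap.lTensor_surjective M hsurj τ
  refine ⟨LinearMap.lTensor M (LinearMap.fst R N N) u,
    LinearMap.lTensor M (LinearMap.snd R N N) u, ?_⟩
  rw [← LinearMap.comp_apply, ← LinearMap.comp_apply, ← LinearMap.add_apply,
    ← LinearMap.lTensor_comp, ← LinearMap.lTensor_comp, ← LinearMap.lTensor_add]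
  rfl

namespace MultiProjPaper

variable {K : Type} [Field K] {V : Type} [AddCommGroup V] [Module K V] {m : ℕ}

lemma polyMulBil_poly (t : ℕ) (g : PmT K m 1) (a : PmT K m t) :
    (polyMulBil K m t g a).poly = g.poly * a.poly := rfl

lemma polyMulBil_comm (t : ℕ) (g g' : PmT K m 1) :
    (polyMulBil K m (t + 1) g).comp (polyMulBil K m t g') =
      (polyMulBil K m (t + 1) g').comp (polyMulBil K m t g) :=
  LinearMap.ext fun a => Subtype.ext (mul_left_comm g.poly g'.poly a.poly)

lemma evMap_lTensor_polyMulBil (Z : ZeroDimInProd K V m) (t : ℕ) (g : PmT K m 1)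
    (x : V ⊗[K] PmT K m t) :
    evMap Z (t + 1) (LinearMap.lTensor V (polyMulBil K m t g) x) =
      aeval Z.ξ g.poly * evMap Z t x := by
  induction x using TensorProduct.induction_on with
  | zero => simp
  | tmul v a =>
    simp only [LinearMap.lTensor_tmul, evMap, evBil, TensorProduct.lift.tmul, LinearMap.mk₂_apply,
      polyMulBil_poly, map_mul]
    ring
  | add x x' hx hx' => rw [map_add, map_add, hx, hx', map_add, mul_add]

lemma surjective_evMap_of_h1ZP_eq_zero (Z : ZeroDimInProd K V m) {t : ℕ} (h : h1ZP Z t = 0) :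
    Function.Surjective (evMap Z t) := by
  rw [← LinearMap.range_eq_top]
  exact Submodule.eq_top_of_finrank_eq
    ((Submodule.finrank_le _).antisymm (Nat.le_of_sub_eq_zero h))

lemma surjective_evMap_of_le (Z : ZeroDimInProd K V m) {g : PmT K m 1}
    (hg : IsUnit (aeval Z.ξ g.poly)) {e t : ℕ} (he : Function.Surjective (evMap Z e))
    (het : e ≤ t) : Function.Surjective (evMap Z t) := by
  induction t, het using Nat.le_induction with
  | base => exact he
  | succ t _ ih =>
    intro a
    obtain ⟨x, hx⟩ := ih (hg.unit⁻¹ * a)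
    exact ⟨LinearMap.lTensor V (polyMulBil K m t g) x, by
      rw [evMap_lTensor_polyMulBil, hx, ← mul_assoc, hg.mul_val_inv, one_mul]⟩

noncomputable def linearForm (K : Type) [Field K] (c : K) : PmT K 1 1 :=
  ⟨X 0 + C c * X 1, (isHomogeneous_X K 0).add ((isHomogeneous_X K 1).C_mul c)⟩

lemma linearForm_poly (c : K) : (linearForm K c).poly = X 0 + C c * X 1 := rfl

lemma exists_isUnit_aeval_linearForm [Infinite K] (Z : ZeroDimInProd K V 1) :
    ∃ c c' : K, c ≠ c' ∧ IsUnit (aeval Z.ξ (linearForm K c).poly) ∧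
      IsUnit (aeval Z.ξ (linearForm K c').poly) := by
  have : IsArtinianRing Z.A := isArtinian_of_tower K inferInstance
  have hspan : Ideal.span {Z.ξ 0, Z.ξ 1} = ⊤ := by
    rw [← Z.spanξ]
    congr 1
    ext
    simp [Fin.exists_fin_two, eq_comm]
  have hbad := finite_setOf_not_isUnit_add_algebraMap_mul (K := K) hspan
  obtain ⟨c, hc⟩ := hbad.infinite_compl.nonempty
  obtain ⟨c', hc'⟩ := ((hbad.union (Set.finite_singleton c)).infinite_compl).nonempty
  simp only [Set.mem_compl_iff, Set.mem_union, Set.mem_ofPred_eq, Set.mem_singleton_iff, not_or,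
    not_not] at hc hc'
  exact ⟨c, c', Ne.symm hc'.2, by simpa [linearForm_poly] using hc,
    by simpa [linearForm_poly] using hc'.1⟩

lemma exists_linearForm_mul_add_linearForm_mul [CharZero K] {c c' : K} (hcc : c ≠ c') {t : ℕ}
    (h : PmT K 1 (t + 1)) :
    ∃ a b : PmT K 1 t,
      polyMulBil K 1 t (linearForm K c) a + polyMulBil K 1 t (linearForm K c') b = h := by
  obtain ⟨q, hq, hpq⟩ := h.isHomogeneous.exists_sum_X_mul
  refine ⟨⟨C (-c' * (c - c')⁻¹) * q 0 + C (c - c')⁻¹ * q 1,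
      ((hq 0).C_mul _).add ((hq 1).C_mul _)⟩,
    ⟨C (c * (c - c')⁻¹) * q 0 - C (c - c')⁻¹ * q 1,
      ((hq 0).C_mul _).sub ((hq 1).C_mul _)⟩, Subtype.ext ?_⟩
  change (linearForm K c).poly * _ + (linearForm K c').poly * _ = h.poly
  have hd' : C (c - c') * C (c - c')⁻¹ = (1 : MvPolynomial (Fin 2) K) := by
    rw [← map_mul, mul_inv_cancel₀ (sub_ne_zero.mpr hcc), map_one]
  rw [hpq, Fin.sum_univ_two, linearForm_poly, linearForm_poly]
  dsimp only [PmT.poly]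
  simp only [map_mul, map_neg, map_sub] at hd' ⊢
  linear_combination (X 0 * q 0 + X 1 * q 1) * hd'

lemma surjective_muMap [CharZero K] (Z : ZeroDimInProd K V 1) {c c' : K} (hcc : c ≠ c')
    (hc' : IsUnit (aeval Z.ξ (linearForm K c').poly)) {s : ℕ}
    (hs : Function.Surjective (evMap Z s)) : Function.Surjective (muMap Z (s + 1)) := by
  set mulBy := fun (c : K) (t : ℕ) => LinearMap.lTensor V (polyMulBil K 1 t (linearForm K c))
  rintro ⟨τ, hτ⟩
  obtain ⟨σ, w, rfl⟩ := TensorProduct.exists_lTensor_add_lTensor _ _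
    (exists_linearForm_mul_add_linearForm_mul hcc) τ
  obtain ⟨α, hα⟩ := hs (-(hc'.unit⁻¹ * evMap Z (s + 1) σ))
  set σ' := σ + mulBy c' s α
  set w' := w - mulBy c s α
  have hσ' : evMap Z (s + 1) σ' = 0 := by
    rw [map_add, evMap_lTensor_polyMulBil, hα, mul_neg, ← mul_assoc, hc'.mul_val_inv, one_mul,
      add_neg_cancel]
  have hτ' : mulBy c (s + 1) σ + mulBy c' (s + 1) w =
      mulBy c (s + 1) σ' + mulBy c' (s + 1) w' := by
    have hcomm := LinearMap.congr_fun
      (congrArg (LinearMap.lTensor V) (polyMulBil_comm s (linearForm K c) (linearForm K c'))) α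
    simp only [LinearMap.lTensor_comp, LinearMap.comp_apply] at hcomm
    simp only [σ', w', mulBy, map_add, map_sub, hcomm]
    abel
  have hw' : evMap Z (s + 1) w' = 0 := by
    have h0 : evMap Z (s + 1 + 1) (mulBy c (s + 1) σ' + mulBy c' (s + 1) w') = 0 := hτ' ▸ hτ
    rwa [map_add, evMap_lTensor_polyMulBil, evMap_lTensor_polyMulBil, hσ', mul_zero, zero_add,
      hc'.mul_right_eq_zero] at h0
  refine ⟨linearForm K c ⊗ₜ ⟨σ', hσ'⟩ + linearForm K c' ⊗ₜ ⟨w', hw'⟩, Subtype.ext ?_⟩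
  rw [map_add]
  exact hτ'.symm

theorem statement4_general (K : Type) [Field K] [IsAlgClosed K] [CharZero K]
    (V : Type) [AddCommGroup V] [Module K V]
    (Z : ZeroDimInProd K V 1)
    (hz : ∃ z : ℕ, h1ZP Z z = 0) :
    ∀ y : ℕ, Nat.find hz < y → Function.Surjective ⇑(muMap Z y) := by
  intro y hy
  obtain ⟨s, rfl⟩ := Nat.exists_eq_add_of_lt hy
  obtain ⟨c, c', hcc, hc, hc'⟩ := exists_isUnit_aeval_linearForm Z
  have he := surjective_evMap_of_h1ZP_eq_zero Z (Nat.find_spec hz)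
  exact surjective_muMap Z hcc hc' (surjective_evMap_of_le Z hc he (Nat.le_add_right _ _))

/-- Proposition `bg1`(2).
Let `Y` be an integral projective variety over an algebraically closed field `K` of
characteristic `0`, `R` a globally generated line bundle on `Y` with `h^1(Y, R) = 0`,
`X := Y × ℙ^1`, `R ⊠ (t) := π_1^*(R) ⊗ π_2^*(O_{ℙ^1}(t))`. Let `Z ⊂ X` be a
zero-dimensional closed subscheme (modeled, together with the data of `(Y, R)`, by a
`ZeroDimInProd` structure with `V = H^0(Y, R)`) such that `h^1(X, 𝓘_Z ⊗ R ⊠ (z)) = 0`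
for some `z ∈ ℕ`, and let `e` be the minimal such natural number. Then the multiplication
map `μ_y : H^0(π_2^*(O_{ℙ^1}(1))) ⊗ H^0(𝓘_Z ⊗ R ⊠ (y)) → H^0(𝓘_Z ⊗ R ⊠ (y+1))` is
surjective for all `y > e`. -/
theorem statement4 (K : Type) [Field K] [IsAlgClosed K] [CharZero K]
    (V : Type) [AddCommGroup V] [Module K V] [FiniteDimensional K V]
    (Z : ZeroDimInProd K V 1)
    (hz : ∃ z : ℕ, h1ZP Z z = 0) :
    ∀ y : ℕ, Nat.find hz < y → Function.Surjective ⇑(muMap Z y) :=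
  statement4_general K V Z hz

end MultiProjPaper
end

section
/- Let X := ℙ^{n_1} × ⋯ × ℙ^{n_k} with n_i ∈ {1, 2} for all i. Fix an integer z > 0 and let S ⊂ X be a general subset of cardinality z. Then S has maximal rank, i.e., for every (a_1,…,a_k) ∈ ℕ^k, either h^0(X, I_S(a_1,…,a_k)) = 0 or h^1(X, I_S(a_1,…,a_k)) = 0. -/
/-!
Core framework: a concrete algebraic model of the multiprojective space
`X = ℙ^{n 0} × ⋯ × ℙ^{n (k-1)}` over a field `K`, via its multihomogeneous
coordinate ring `R = K[x_{ij}]`.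
-/

open MvPolynomial Module
open scoped TensorProduct

namespace MultiProjPaper

variable (K : Type) [Field K] (k : ℕ) (n : Fin k → ℕ)

/-- `h^0(X, 𝓘_S(a))` for a finite (reduced) set of points `S` of `X` given by a tuple. -/
noncomputable def h0pts {s : ℕ} (T : Fin s → MPPoint K k n) (a : Fin k → ℕ) : ℕ :=
  finrank K ↥(secI K k n (vanIdeal K k n (Set.range T)) a)

/-- `h^1(X, 𝓘_S(a))` for a finite reduced set of `s` (distinct) points of `X`:
`h^1(𝓘_S(a)) = #S - (h^0(O_X(a)) - h^0(𝓘_S(a)))`. -/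
noncomputable def h1pts {s : ℕ} (T : Fin s → MPPoint K k n) (a : Fin k → ℕ) : ℤ :=
  (s : ℤ) + (h0pts K k n T a : ℤ) - (finrank K ↥(mcomp K k n a) : ℤ)

/-! ### Auxiliary development for `statement11` -/

section Aux

/-- Coordinates of (a representative of) a point, as a function on variable indices. -/
def pcoords (P : MPPoint K k n) : MPIdx k n → K := fun x => P.v x.1 x.2

/-- The evaluation map `H^0(O_X(a)) → K^z` at a tuple of `z` points. -/
noncomputable def Emap {z : ℕ} (a : Fin k → ℕ) (T : Fin z → MPPoint K k n) :
    ↥(mcomp K k n a) →ₗ[K] (Fin z → K) where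
  toFun f := fun j => MvPolynomial.eval (pcoords K k n (T j)) f.1
  map_add' f g := by funext j; simp
  map_smul' c f := by funext j; simp [smul_eval]

lemma weight_apply_coord (μ : MPIdx k n →₀ ℕ) (i : Fin k) :
    Finsupp.weight (mpWeight k n) μ i = ∑ x2 : Fin (n i + 1), μ ⟨i, x2⟩ := by
  classical
  rw [Finsupp.weight_apply, Finsupp.sum, Finset.sum_apply]
  simp only [Pi.smul_apply, mpWeight, smul_eq_mul]
  rw [Finset.sum_subset (Finset.subset_univ μ.support)
    (by intro x _ hx; simp only [Finsupp.mem_support_iff, not_not] at hx; simp [hx])]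
  rw [← Finset.univ_sigma_univ, Finset.sum_sigma]
  rw [Finset.sum_eq_single i]
  · apply Finset.sum_congr rfl
    intro x2 _
    simp [Pi.single_apply]
  · intro b _ hb
    apply Finset.sum_eq_zero
    intro x2 _
    simp [Pi.single_apply, hb]
  · intro h; exact absurd (Finset.mem_univ i) h

lemma coneEval_eq {a : Fin k → ℕ} {f : MPR K k n} (hf : f ∈ mcomp K k n a)
    (lam : Fin k → K) (P : MPPoint K k n) :
    coneEval K k n lam P f
      = (∏ i, lam i ^ a i) * MvPolynomial.eval (pcoords K k n P) f := by
  classical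
  conv_lhs => rw [coneEval, f.as_sum]
  conv_rhs => rw [f.as_sum]
  rw [map_sum, map_sum, Finset.mul_sum]
  refine Finset.sum_congr rfl fun μ hμ => ?_
  have hdeg : Finsupp.weight (mpWeight k n) μ = a :=
    hf (MvPolynomial.mem_support_iff.1 hμ)
  rw [eval_monomial, eval_monomial]
  rw [Finsupp.prod, Finsupp.prod]
  have key : ∀ g : MPIdx k n → K, ∏ x ∈ μ.support, g x ^ μ x = ∏ x : MPIdx k n, g x ^ μ x := by
    intro g
    refine Finset.prod_subset (Finset.subset_univ _) ?_
    intro x _ hx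
    simp only [Finsupp.mem_support_iff, not_not] at hx
    simp [hx]
  rw [key, key]
  have expand : ∏ x : MPIdx k n, (lam x.1 * P.v x.1 x.2) ^ μ x
      = (∏ x : MPIdx k n, lam x.1 ^ μ x) * ∏ x : MPIdx k n, (pcoords K k n P x) ^ μ x := by
    rw [← Finset.prod_mul_distrib]
    refine Finset.prod_congr rfl fun x _ => ?_
    rw [mul_pow]; rfl
  rw [expand]
  have hlam : ∏ x : MPIdx k n, lam x.1 ^ μ x = ∏ i, lam i ^ a i := by
    rw [← Finset.univ_sigma_univ, Finset.prod_sigma]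
    refine Finset.prod_congr rfl fun i _ => ?_
    rw [show (∏ s : Fin (n i + 1), lam (⟨i, s⟩ : MPIdx k n).fst ^ μ ⟨i, s⟩)
        = ∏ s : Fin (n i + 1), lam i ^ μ ⟨i, s⟩ from rfl]
    rw [Finset.prod_pow_eq_pow_sum, ← weight_apply_coord k n μ i, hdeg]
  rw [hlam]; ring

lemma mem_vanIdeal_of_homog {a : Fin k → ℕ} {f : MPR K k n} (hf : f ∈ mcomp K k n a)
    {S : Set (MPPoint K k n)}
    (h : ∀ P ∈ S, MvPolynomial.eval (pcoords K k n P) f = 0) :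
    f ∈ vanIdeal K k n S := by
  intro P hP lam
  rw [coneEval_eq K k n hf, h P hP, mul_zero]

lemma eval_eq_zero_of_mem_vanIdeal {f : MPR K k n} {S : Set (MPPoint K k n)}
    (hf : f ∈ vanIdeal K k n S) {P : MPPoint K k n} (hP : P ∈ S) :
    MvPolynomial.eval (pcoords K k n P) f = 0 := by
  show MvPolynomial.eval (fun x : MPIdx k n => P.v x.1 x.2) f = 0
  simpa [coneEval, pcoords] using hf P hP fun _ => 1

lemma secI_eq_map {z : ℕ} (a : Fin k → ℕ) (T : Fin z → MPPoint K k n) :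
    secI K k n (vanIdeal K k n (Set.range T)) a
      = Submodule.map (mcomp K k n a).subtype (LinearMap.ker (Emap K k n a T)) := by
  ext f
  simp only [secI, Submodule.mem_inf, Submodule.mem_map, LinearMap.mem_ker,
    Submodule.restrictScalars_mem]
  constructor
  · rintro ⟨hm, hv⟩
    refine ⟨⟨f, hm⟩, ?_, rfl⟩
    funext j
    exact eval_eq_zero_of_mem_vanIdeal K k n hv ⟨j, rfl⟩
  · rintro ⟨⟨g, hm⟩, hker, rfl⟩
    refine ⟨hm, ?_⟩
    refine mem_vanIdeal_of_homog K k n hm ?_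
    rintro P ⟨j, rfl⟩
    exact congrFun hker j

/-- The Finset of exponents of multidegree `a`. -/
noncomputable def Aset (a : Fin k → ℕ) : Finset (MPIdx k n →₀ ℕ) := by
  classical
  exact (Finset.Iic (Finsupp.equivFunOnFinite.symm (fun x : MPIdx k n => a x.1))).filter
    (fun μ => Finsupp.weight (mpWeight k n) μ = a)

lemma mem_Aset {a : Fin k → ℕ} {μ : MPIdx k n →₀ ℕ} :
    μ ∈ Aset k n a ↔ Finsupp.weight (mpWeight k n) μ = a := by
  classical
  rw [Aset]
  simp only [Finset.mem_filter, Finset.mem_Iic, and_iff_right_iff_imp]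
  intro hw
  rw [Finsupp.le_def]
  intro x
  show μ x ≤ a x.1
  have : μ x ≤ ∑ x2 : Fin (n x.1 + 1), μ ⟨x.1, x2⟩ := by
    refine Finset.single_le_sum (f := fun x2 => μ ⟨x.1, x2⟩) (fun _ _ => Nat.zero_le _)
      (Finset.mem_univ x.2)
  rw [← weight_apply_coord k n μ x.1, hw] at this
  exact this

lemma support_subset_Aset {a : Fin k → ℕ} {f : MPR K k n} (hf : f ∈ mcomp K k n a) :
    f.support ⊆ Aset k n a := by
  intro μ hμ
  rw [mem_Aset]
  exact hf (MvPolynomial.mem_support_iff.1 hμ)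

instance mcomp_findim (a : Fin k → ℕ) : FiniteDimensional K ↥(mcomp K k n a) := by
  classical
  have hle : mcomp K k n a ≤ Submodule.span K
      ((fun μ : MPIdx k n →₀ ℕ => (MvPolynomial.monomial μ (1 : K) : MPR K k n)) ''
        (Aset k n a : Set (MPIdx k n →₀ ℕ))) := by
    intro f hf
    rw [f.as_sum]
    refine Submodule.sum_mem _ fun μ hμ => ?_
    have : (MvPolynomial.monomial μ (MvPolynomial.coeff μ f) : MPR K k n)
        = (MvPolynomial.coeff μ f) • MvPolynomial.monomial μ (1 : K) := by
      rw [MvPolynomial.smul_monomial, smul_eq_mul, mul_one]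
    rw [this]
    exact Submodule.smul_mem _ _ (Submodule.subset_span
      ⟨μ, support_subset_Aset K k n hf hμ, rfl⟩)
  have : FiniteDimensional K ↥(Submodule.span K
      ((fun μ : MPIdx k n →₀ ℕ => (MvPolynomial.monomial μ (1 : K) : MPR K k n)) ''
        (Aset k n a : Set (MPIdx k n →₀ ℕ)))) :=
    FiniteDimensional.span_of_finite K ((Aset k n a).finite_toSet.image _)
  exact Submodule.finiteDimensional_of_le hle

lemma h0_of_inj {z : ℕ} {a : Fin k → ℕ} {T : Fin z → MPPoint K k n}
    (h : Function.Injective (Emap K k n a T)) : h0pts K k n T a = 0 := by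
  rw [h0pts, secI_eq_map K k n a T]
  have : LinearMap.ker (Emap K k n a T) = ⊥ := LinearMap.ker_eq_bot.2 h
  rw [this]
  simp

lemma h1_of_surj {z : ℕ} {a : Fin k → ℕ} {T : Fin z → MPPoint K k n}
    (h : Function.Surjective (Emap K k n a T)) : h1pts K k n T a = 0 := by
  have hrn := LinearMap.finrank_range_add_finrank_ker (Emap K k n a T)
  rw [LinearMap.range_eq_top.2 h] at hrn
  have htop : finrank K ↥(⊤ : Submodule K (Fin z → K)) = z := by
    rw [finrank_top, Module.finrank_pi, Fintype.card_fin]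
  rw [htop] at hrn
  have hker : h0pts K k n T a = finrank K ↥(LinearMap.ker (Emap K k n a T)) := by
    rw [h0pts, secI_eq_map K k n a T, Submodule.finrank_map_subtype_eq]
  rw [h1pts, hker]
  omega

end Aux

section Det

lemma prod_monomial_one {ι σ' : Type} (s : Finset ι) (e : ι → (σ' →₀ ℕ)) :
    (∏ j ∈ s, (MvPolynomial.monomial (e j) (1 : K) : MvPolynomial σ' K))
      = MvPolynomial.monomial (∑ j ∈ s, e j) 1 := by
  classical
  induction s using Finset.cons_induction with
  | empty => simp
  | cons a s ha ih =>
      rw [Finset.prod_cons, Finset.sum_cons, ih, MvPolynomial.monomial_mul, one_mul]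

/-- Generic determinant: columns indexed by points `p j`, rows by monomials `d i`. -/
noncomputable def Dpoly {z m : ℕ} (d : Fin m → (MPIdx k n →₀ ℕ)) (p : Fin m → Fin z) :
    MvPolynomial (Fin z × MPIdx k n) K :=
  Matrix.det (Matrix.of fun i j : Fin m =>
    (rename (Prod.mk (p j)) (MvPolynomial.monomial (d i) (1 : K)) :
      MvPolynomial (Fin z × MPIdx k n) K))

lemma expMap_inj {z m : ℕ} {d : Fin m → (MPIdx k n →₀ ℕ)} (hd : Function.Injective d)
    {p : Fin m → Fin z} (hp : Function.Injective p) (g g' : Fin m → Fin m)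
    (h : (∑ j, Finsupp.mapDomain (Prod.mk (p j)) (d (g j)))
       = ∑ j, Finsupp.mapDomain (Prod.mk (p j)) (d (g' j))) : g = g' := by
  classical
  funext j
  apply hd
  apply Finsupp.ext
  intro x
  have collapse : ∀ g0 : Fin m → Fin m,
      (∑ j' : Fin m, (Finsupp.mapDomain (Prod.mk (p j')) (d (g0 j')))) ((p j, x)) = d (g0 j) x := by
    intro g0
    rw [Finsupp.finset_sum_apply]
    rw [Finset.sum_eq_single j]
    · exact Finsupp.mapDomain_apply (fun x1 x2 hh => by injection hh) _ x
    · intro b _ hb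
      refine Finsupp.mapDomain_notin_range _ _ ?_
      rintro ⟨x', hx'⟩
      have : p b = p j := congrArg Prod.fst hx'
      exact hb (hp this)
    · intro hj; exact absurd (Finset.mem_univ j) hj
  have := congrFun (congrArg (DFunLike.coe) h) (p j, x)
  rw [collapse g, collapse g'] at this
  exact this

lemma Dpoly_ne_zero {z m : ℕ} {d : Fin m → (MPIdx k n →₀ ℕ)} (hd : Function.Injective d)
    {p : Fin m → Fin z} (hp : Function.Injective p) : Dpoly K k n d p ≠ 0 := by
  classical
  have hterm : ∀ σ : Equiv.Perm (Fin m),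
      (∏ i : Fin m, Matrix.of (fun i j : Fin m =>
        (rename (Prod.mk (p j)) (MvPolynomial.monomial (d i) (1 : K)) :
          MvPolynomial (Fin z × MPIdx k n) K)) (σ i) i)
        = MvPolynomial.monomial (∑ j, Finsupp.mapDomain (Prod.mk (p j)) (d (σ j))) 1 := by
    intro σ
    rw [← prod_monomial_one]
    refine Finset.prod_congr rfl fun j _ => ?_
    simp [Matrix.of_apply, rename_monomial]
  have hcoeff : MvPolynomial.coeff (∑ j, Finsupp.mapDomain (Prod.mk (p j)) (d j))
      (Dpoly K k n d p) = 1 := by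
    rw [Dpoly, Matrix.det_apply, MvPolynomial.coeff_sum]
    rw [Finset.sum_eq_single (1 : Equiv.Perm (Fin m))]
    · rw [hterm]
      simp [MvPolynomial.coeff_smul, MvPolynomial.coeff_monomial]
    · intro σ _ hσ
      rw [hterm, MvPolynomial.coeff_smul, MvPolynomial.coeff_monomial, if_neg, smul_zero]
      intro hEq
      exact hσ (Equiv.Perm.ext fun j => congrFun (expMap_inj k n hd hp _ _ hEq) j)
    · intro h1; exact absurd (Finset.mem_univ _) h1
  intro h
  rw [h] at hcoeff
  simp at hcoeff

lemma eval_Dpoly {z m : ℕ} (d : Fin m → (MPIdx k n →₀ ℕ)) (p : Fin m → Fin z)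
    (T : Fin z → MPPoint K k n) :
    MvPolynomial.eval (fun q : Fin z × MPIdx k n => (T q.1).v q.2.1 q.2.2)
        (Dpoly K k n d p)
      = Matrix.det (Matrix.of fun i j : Fin m =>
          MvPolynomial.eval (pcoords K k n (T (p j))) (MvPolynomial.monomial (d i) (1 : K))) := by
  rw [Dpoly, RingHom.map_det]
  congr 1
  ext i j
  rw [RingHom.mapMatrix_apply, Matrix.map_apply, Matrix.of_apply, Matrix.of_apply, eval_rename]
  rfl

lemma monomial_mem_mcomp {a : Fin k → ℕ} {μ : MPIdx k n →₀ ℕ} (h : μ ∈ Aset k n a) :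
    (MvPolynomial.monomial μ (1 : K) : MPR K k n) ∈ mcomp K k n a :=
  MvPolynomial.isWeightedHomogeneous_monomial _ _ _ ((mem_Aset k n).mp h)

lemma Emap_apply {z : ℕ} (a : Fin k → ℕ) (T : Fin z → MPPoint K k n)
    (f : ↥(mcomp K k n a)) (j : Fin z) :
    Emap K k n a T f j = MvPolynomial.eval (pcoords K k n (T j)) f.1 := rfl

lemma weight_single (x : MPIdx k n) (c : ℕ) :
    Finsupp.weight (mpWeight k n) (Finsupp.single x c) = c • mpWeight k n x := by
  rw [Finsupp.weight_apply]
  exact Finsupp.sum_single_index (zero_smul ℕ _)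

lemma smul_single_pi (i : Fin k) (c : ℕ) : c • (Pi.single i 1 : Fin k → ℕ) = Pi.single i c := by
  funext j
  simp [Pi.single_apply, Pi.smul_apply, mul_ite]

lemma weight_sum_single (e : Fin k → ℕ) (c : ∀ i, Fin (n i + 1)) :
    Finsupp.weight (mpWeight k n)
      (∑ i : Fin k, Finsupp.single (⟨i, c i⟩ : MPIdx k n) (e i)) = e := by
  rw [map_sum]
  have h1 : ∀ i : Fin k, Finsupp.weight (mpWeight k n)
      (Finsupp.single (⟨i, c i⟩ : MPIdx k n) (e i)) = Pi.single i (e i) := by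
    intro i
    rw [weight_single]
    exact smul_single_pi k i (e i)
  simp_rw [h1]
  exact Finset.univ_sum_single e

end Det


section Per

lemma surj_mono {z : ℕ} {a b : Fin k → ℕ} (hab : ∀ i, a i ≤ b i) (T : Fin z → MPPoint K k n)
    (hs : Function.Surjective (Emap K k n a T)) :
    Function.Surjective (Emap K k n b T) := by
  classical
  have key : ∀ j : Fin z, ∃ w : ↥(mcomp K k n b), Emap K k n b T w = Pi.single j 1 := by
    intro j
    obtain ⟨f, hf⟩ := hs (Pi.single j 1)
    choose c hc using fun i : Fin k => Function.ne_iff.1 ((T j).nz i)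
    set g : MPR K k n := ∏ i : Fin k, (X (⟨i, c i⟩ : MPIdx k n)) ^ (b i - a i) with hgdef
    have hgm : g = MvPolynomial.monomial
        (∑ i : Fin k, Finsupp.single (⟨i, c i⟩ : MPIdx k n) (b i - a i)) 1 := by
      rw [hgdef]
      simp_rw [MvPolynomial.X_pow_eq_monomial]
      exact prod_monomial_one K _ _
    have hg : g ∈ mcomp K k n (fun i => b i - a i) := by
      rw [hgm]
      exact MvPolynomial.isWeightedHomogeneous_monomial _ _ _
        (weight_sum_single k n _ c)
    have hmem : (f.1 * g) ∈ mcomp K k n b := by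
      have hm := ((mem_weightedHomogeneousSubmodule K _ _ _).1 f.2).mul
        ((mem_weightedHomogeneousSubmodule K _ _ _).1 hg)
      have heq : (a + fun i => b i - a i) = b := by
        funext i
        have := hab i
        simp only [Pi.add_apply]
        omega
      exact (mem_weightedHomogeneousSubmodule K _ _ _).2 (heq ▸ hm)
    set s : K := ∏ i : Fin k, ((T j).v i (c i)) ^ (b i - a i) with hsdef
    have hs0 : s ≠ 0 := by
      rw [hsdef, Finset.prod_ne_zero_iff]
      exact fun i _ => pow_ne_zero _ (by simpa using hc i)
    have hevg : MvPolynomial.eval (pcoords K k n (T j)) g = s := by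
      rw [hgdef, map_prod, hsdef]
      refine Finset.prod_congr rfl fun i _ => ?_
      rw [map_pow, MvPolynomial.eval_X]
      rfl
    refine ⟨s⁻¹ • ⟨f.1 * g, hmem⟩, ?_⟩
    rw [map_smul]
    funext j'
    rw [Pi.smul_apply, Emap_apply, map_mul]
    have h1 : MvPolynomial.eval (pcoords K k n (T j')) f.1
        = (Pi.single j 1 : Fin z → K) j' := congrFun hf j'
    by_cases hjj : j' = j
    · subst hjj
      rw [h1, hevg, Pi.single_eq_same, one_mul, smul_eq_mul, inv_mul_cancel₀ hs0]
    · rw [h1, Pi.single_eq_of_ne hjj, zero_mul, smul_zero]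
  choose w hw using key
  intro u
  refine ⟨∑ j, u j • w j, ?_⟩
  rw [map_sum]
  funext j'
  rw [Finset.sum_apply]
  simp_rw [map_smul]
  have : ∀ j, (u j • Emap K k n b T (w j)) j' = u j * (Pi.single j 1 : Fin z → K) j' := by
    intro j
    rw [hw j]
    rfl
  simp_rw [this, Pi.single_apply, mul_ite, mul_one, mul_zero]
  simp

lemma perDegree {z : ℕ} (hn1 : ∀ i, 1 ≤ n i) (a : Fin k → ℕ) :
    ∃ D : MvPolynomial (Fin z × MPIdx k n) K, D ≠ 0 ∧
      ∀ T : Fin z → MPPoint K k n,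
        MvPolynomial.eval (fun q : Fin z × MPIdx k n => (T q.1).v q.2.1 q.2.2) D ≠ 0 →
        Function.Surjective (Emap K k n a T) ∨
          (Function.Injective (Emap K k n a T) ∧ ∀ i, a i < z) := by
  classical
  by_cases hcard : z ≤ (Aset k n a).card
  · -- enough monomials: generic surjectivity
    obtain ⟨t, hts, htc⟩ := Finset.exists_subset_card_eq hcard
    set d : Fin z → (MPIdx k n →₀ ℕ) :=
      fun i => (t.equivFin.symm (Fin.cast htc.symm i) : MPIdx k n →₀ ℕ) with hddef
    have hd : Function.Injective d := by
      intro i1 i2 h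
      have := t.equivFin.symm.injective (Subtype.ext h)
      exact Fin.cast_injective _ this
    have hda : ∀ i, d i ∈ Aset k n a := fun i => hts (t.equivFin.symm _).2
    refine ⟨Dpoly K k n d id, Dpoly_ne_zero K k n hd Function.injective_id,
      fun T hT => Or.inl ?_⟩
    rw [eval_Dpoly] at hT
    set M : Matrix (Fin z) (Fin z) K := Matrix.of fun i j =>
      MvPolynomial.eval (pcoords K k n (T j)) (MvPolynomial.monomial (d i) (1 : K)) with hM
    have hdet : IsUnit M.det := by
      rw [isUnit_iff_ne_zero]
      exact hT
    intro u
    refine ⟨∑ i, (Matrix.vecMul u M⁻¹ i) • ⟨MvPolynomial.monomial (d i) 1,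
      monomial_mem_mcomp K k n (hda i)⟩, ?_⟩
    rw [map_sum]
    funext j
    rw [Finset.sum_apply]
    have hterm : ∀ i, (Emap K k n a T ((Matrix.vecMul u M⁻¹ i) •
        (⟨MvPolynomial.monomial (d i) 1, monomial_mem_mcomp K k n (hda i)⟩ :
          ↥(mcomp K k n a)))) j = Matrix.vecMul u M⁻¹ i * M i j := by
      intro i
      rw [map_smul]
      rfl
    simp_rw [hterm]
    have : ∑ i, Matrix.vecMul u M⁻¹ i * M i j = Matrix.vecMul (Matrix.vecMul u M⁻¹) M j := by
      simp [Matrix.vecMul, dotProduct]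
    rw [this, Matrix.vecMul_vecMul, Matrix.nonsing_inv_mul M hdet, Matrix.vecMul_one]
  · -- few monomials: generic injectivity
    push_neg at hcard
    set m : ℕ := (Aset k n a).card with hmdef
    set d : Fin m → (MPIdx k n →₀ ℕ) := fun i => ((Aset k n a).equivFin.symm i : MPIdx k n →₀ ℕ)
      with hddef
    have hd : Function.Injective d := by
      intro i1 i2 h
      exact (Aset k n a).equivFin.symm.injective (Subtype.ext h)
    have hda : ∀ i, d i ∈ Aset k n a := fun i => ((Aset k n a).equivFin.symm i).2
    set p : Fin m → Fin z := Fin.castLE hcard.le with hpdef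
    have hp : Function.Injective p := Fin.castLE_injective _
    refine ⟨Dpoly K k n d p, Dpoly_ne_zero K k n hd hp, fun T hT => Or.inr ⟨?_, ?_⟩⟩
    · -- injectivity
      rw [eval_Dpoly] at hT
      set M : Matrix (Fin m) (Fin m) K := Matrix.of fun i j =>
        MvPolynomial.eval (pcoords K k n (T (p j))) (MvPolynomial.monomial (d i) (1 : K)) with hM
      have hdet : IsUnit M.det := isUnit_iff_ne_zero.2 hT
      rw [← LinearMap.ker_eq_bot, eq_bot_iff]
      rintro f hf0
      have hf : Emap K k n a T f = 0 := hf0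
      set c : Fin m → K := fun i => MvPolynomial.coeff (d i) f.1 with hcdef
      have hrepr : f.1 = ∑ i : Fin m, MvPolynomial.monomial (d i) (c i) := by
        have h1 : ∑ i : Fin m, MvPolynomial.monomial (d i) (c i)
            = ∑ μ ∈ Aset k n a, MvPolynomial.monomial μ (MvPolynomial.coeff μ f.1) := by
          rw [← Finset.sum_attach (Aset k n a)
            (fun μ => MvPolynomial.monomial μ (MvPolynomial.coeff μ f.1))]
          exact (Equiv.sum_comp (Aset k n a).equivFin.symm
            (fun μ => MvPolynomial.monomial μ.1 (MvPolynomial.coeff μ.1 f.1))).symm ▸ rfl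
        rw [h1]
        conv_lhs => rw [f.1.as_sum]
        refine Finset.sum_subset (support_subset_Aset K k n f.2) ?_
        intro μ _ hμ
        rw [MvPolynomial.notMem_support_iff.1 hμ]
        simp
      have hvm : Matrix.vecMul c M = 0 := by
        funext j
        have h0 := congrFun hf (p j)
        rw [Emap_apply, hrepr, map_sum] at h0
        have hterm : ∀ i, MvPolynomial.eval (pcoords K k n (T (p j)))
            (MvPolynomial.monomial (d i) (c i)) = c i * M i j := by
          intro i
          have : (MvPolynomial.monomial (d i) (c i) : MPR K k n)
              = c i • MvPolynomial.monomial (d i) 1 := by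
            rw [MvPolynomial.smul_monomial, smul_eq_mul, mul_one]
          rw [this, smul_eval]
          rfl
        simp_rw [hterm] at h0
        have : Matrix.vecMul c M j = ∑ i, c i * M i j := by
          simp [Matrix.vecMul, dotProduct]
        rw [this, h0]
        rfl
      have hc : c = 0 := by
        have h2 := congrArg (fun v => Matrix.vecMul v M⁻¹) hvm
        simpa [Matrix.vecMul_vecMul, Matrix.mul_nonsing_inv M hdet, Matrix.vecMul_one,
          Matrix.zero_vecMul] using h2
      rw [Submodule.mem_bot]
      apply Subtype.ext
      rw [hrepr]
      simp only [hc]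
      simp
    · -- all a i < z
      intro i
      by_contra hzi
      push_neg at hzi
      have hni : 1 ≤ n i := hn1 i
      have h1 : (⟨1, by omega⟩ : Fin (n i + 1)) ≠ (0 : Fin (n i + 1)) := by
        intro h
        have := congrArg Fin.val h
        simp at this
      set g : Fin (z + 1) → (MPIdx k n →₀ ℕ) := fun t =>
        (∑ i' : Fin k, Finsupp.single (⟨i', 0⟩ : MPIdx k n)
          (if i' = i then (t : ℕ) else a i'))
        + Finsupp.single (⟨i, ⟨1, by omega⟩⟩ : MPIdx k n) (a i - t) with hgdef
      have hgA : ∀ t, g t ∈ Aset k n a := by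
        intro t
        rw [mem_Aset, hgdef]
        simp only [map_add]
        rw [weight_sum_single k n _ (fun i' => 0), weight_single]
        funext i'
        rw [Pi.add_apply]
        have hsm : ((a i - (t : ℕ)) • mpWeight k n (⟨i, ⟨1, by omega⟩⟩ : MPIdx k n)) i'
            = if i' = i then a i - (t : ℕ) else 0 := by
          rw [show mpWeight k n (⟨i, ⟨1, by omega⟩⟩ : MPIdx k n) = Pi.single i 1 from rfl,
            smul_single_pi k i (a i - (t : ℕ)), Pi.single_apply]
        rw [hsm]
        by_cases hii : i' = i
        · subst hii
          simp only [eq_self_iff_true, if_true]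
          have ht : (t : ℕ) ≤ a i' := le_trans (Nat.le_of_lt_succ t.isLt) hzi
          omega
        · simp [hii]
      have hginj : Function.Injective g := by
        intro t1 t2 h
        have hval : ∀ t : Fin (z + 1), g t (⟨i, 0⟩ : MPIdx k n) = (t : ℕ) := by
          intro t
          rw [hgdef]
          rw [Finsupp.add_apply, Finsupp.finset_sum_apply]
          have h2 : (Finsupp.single (⟨i, ⟨1, by omega⟩⟩ : MPIdx k n) (a i - (t : ℕ)))
              (⟨i, 0⟩ : MPIdx k n) = 0 := by
            rw [Finsupp.single_apply, if_neg]
            intro hcon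
            obtain ⟨-, hh⟩ := Sigma.mk.inj_iff.1 hcon
            exact h1 (eq_of_heq hh)
          rw [h2, add_zero]
          rw [Finset.sum_eq_single i]
          · simp
          · intro b _ hb
            rw [Finsupp.single_apply, if_neg]
            intro hcon
            exact hb (congrArg Sigma.fst hcon)
          · intro hi; exact absurd (Finset.mem_univ i) hi
        have := hval t1
        rw [h, hval t2] at this
        exact Fin.val_injective this.symm
      have hcard2 : z + 1 ≤ m := by
        rw [hmdef, ← Fintype.card_fin (z + 1), ← Finset.card_univ]
        exact Finset.card_le_card_of_injOn g (fun t _ => hgA t)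
          (Function.Injective.injOn hginj)
      omega

end Per

/-- part (i) of Theorem `p2p1`.
Let `X = ℙ^{n_1} × ⋯ × ℙ^{n_k}` with `n_i ∈ {1,2}` for all `i`, over an algebraically
closed field `K` of characteristic `0`. Fix an integer `z > 0` and let `S ⊂ X` be a
general subset of cardinality `z`. Then `S` has maximal rank: for every `a ∈ ℕ^k`,
either `h^0(X, 𝓘_S(a)) = 0` or `h^1(X, 𝓘_S(a)) = 0`. -/
theorem statement11 (K : Type) [Field K] [IsAlgClosed K] [CharZero K]
    (k : ℕ) (n : Fin k → ℕ) (hn : ∀ i, n i = 1 ∨ n i = 2)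
    (z : ℕ) (hz : 0 < z) :
    GenericPts K k n z (fun T =>
      ∀ a : Fin k → ℕ, h0pts K k n T a = 0 ∨ h1pts K k n T a = 0) := by
  classical
  have hn1 : ∀ i, 1 ≤ n i := fun i => by rcases hn i with h | h <;> omega
  choose D hD0 hDP using fun a : Fin k → ℕ => perDegree K k n (z := z) hn1 a
  set B : Finset (Fin k → ℕ) :=
    Finset.image (fun v : Fin k → Fin (z + 1) => fun i => (v i : ℕ)) Finset.univ with hB
  refine ⟨∏ a ∈ B, D a, ?_, ?_⟩
  · rw [Finset.prod_ne_zero_iff]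
    exact fun a _ => hD0 a
  · intro T hT a
    rw [map_prod] at hT
    have hTa : ∀ a' ∈ B, MvPolynomial.eval
        (fun q : Fin z × MPIdx k n => (T q.1).v q.2.1 q.2.2) (D a') ≠ 0 := by
      intro a' ha' h0
      exact hT (Finset.prod_eq_zero ha' h0)
    set a' : Fin k → ℕ := fun i => min (a i) z with ha'
    have ha'B : a' ∈ B := by
      rw [hB, Finset.mem_image]
      exact ⟨fun i => (⟨min (a i) z, by omega⟩ : Fin (z + 1)), Finset.mem_univ _, rfl⟩
    rcases hDP a' T (hTa a' ha'B) with hs | ⟨hi, hlt⟩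
    · right
      exact h1_of_surj K k n (surj_mono K k n (fun i => min_le_left _ _) T hs)
    · left
      have haa : a' = a := by
        funext i
        have h2 := hlt i
        rw [ha'] at h2 ⊢
        simp only at h2 ⊢
        omega
      exact h0_of_inj K k n (haa ▸ hi)

end MultiProjPaper
end
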